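/- arXiv:2512.22514 — 5 statements merged into one kernel-verified Lean document; each statement's English description precedes it below -/
import Mathlib

section
/- Let {E_{α,k} : k=1,…,M}, α=1,…,N, be an informationally complete (N,M)-POVM on ℂ^d with efficiency parameter x. Then for every density matrix ρ on ℂ^d, the coincidence index C(x,ρ) = Σ_{α=1}^{N} Σ_{k=1}^{M} (tr(E_{α,k} ρ))² equals (d(M²x − d)·tr(ρ²) + d³ − M²x)/(d·M(M−1)). -/
open scoped BigOperators ComplexOrder
open Matrix

noncomputable def traceNorm {m n : Type*} [Fintype m] [Fintype n] [DecidableEq n]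
    (X : Matrix m n ℂ) : ℝ :=
  ((Matrix.posSemidef_conjTranspose_mul_self X).1.eigenvectorUnitary.1 *
      diagonal (((↑) : ℝ → ℂ) ∘ (√·) ∘ (Matrix.posSemidef_conjTranspose_mul_self X).1.eigenvalues) *
      (star (Matrix.posSemidef_conjTranspose_mul_self X).1.eigenvectorUnitary : Matrix n n ℂ)).trace.re

def IsDensityMatrix {ι : Type*} [Fintype ι] (ρ : Matrix ι ι ℂ) : Prop :=
  ρ.PosSemidef ∧ ρ.trace = 1

def IsNMPOVM (d N M : ℕ) (x : ℝ)
    (E : Fin N → Fin M → Matrix (Fin d) (Fin d) ℂ) : Prop :=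
  (∀ α k, (E α k).PosSemidef) ∧
  (∀ α, ∑ k, E α k = 1) ∧
  (∀ α k, (E α k).trace = (((d : ℝ) / M : ℝ) : ℂ)) ∧
  (∀ α k, (E α k * E α k).trace = (x : ℂ)) ∧
  (∀ α k l, k ≠ l → (E α k * E α l).trace =
      ((((d : ℝ) - M * x) / (M * ((M : ℝ) - 1)) : ℝ) : ℂ)) ∧
  (∀ α β k l, α ≠ β → (E α k * E β l).trace = (((d : ℝ) / M ^ 2 : ℝ) : ℂ)) ∧
  ((d : ℝ) / M ^ 2 < x ∧ x ≤ min ((d : ℝ) ^ 2 / M ^ 2) ((d : ℝ) / M))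

def IsInfoComplete (d N M : ℕ) : Prop := ((M : ℝ) - 1) * N = (d : ℝ) ^ 2 - 1

/-!
Write `q = (d - Mx)/(M(M-1))` and `r = d/M²`. The trace Gram matrix `tr (E_{α,k} E_{β,l})` is
the block matrix with entries `x` (same `α`, same `k`), `q` (same `α`) and `r`. Its kernel is a
proper subspace of the `N`-dimensional space of vectors constant on each block (it misses the
all-ones vector), so the Gram matrix has rank at least `N(M-1) + 1 = d²` and the POVM elements
span all `d × d` matrices. Testing against them shows
`∑ tr (E_{α,k} ρ) E_{α,k} = (x - q) ρ + (M/d)(rN + q - r) 1`, and pairing with `ρ` gives the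
coincidence index.
-/

section BlockGram

open Module

variable {K ι κ : Type*} [Field K] [DecidableEq ι] [DecidableEq κ]

def blockGram (p q r : K) : Matrix (ι × κ) (ι × κ) K :=
  Matrix.of fun i j => if i.1 = j.1 then (if i.2 = j.2 then p else q) else r

theorem blockGram_apply (p q r : K) (i j : ι × κ) :
    blockGram p q r i j =
      r + (if i.1 = j.1 then q - r else 0) + (if i = j then p - q else 0) := by
  obtain ⟨α, k⟩ := i
  obtain ⟨β, l⟩ := j
  by_cases hαβ : α = β <;> by_cases hkl : k = l <;> simp [blockGram, hαβ, hkl]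

variable [Fintype ι] [Fintype κ]

theorem blockGram_mulVec_apply (p q r : K) (c : ι × κ → K) (i : ι × κ) :
    (blockGram p q r *ᵥ c) i =
      r * ∑ j, c j + (q - r) * ∑ l, c (i.1, l) + (p - q) * c i := by
  have hblock : ∑ j : ι × κ, (if i.1 = j.1 then q - r else 0) * c j =
      (q - r) * ∑ l, c (i.1, l) := by
    rw [Fintype.sum_prod_type, Fintype.sum_eq_single i.1 fun α hα => by simp [Ne.symm hα],
      Finset.mul_sum]
    simp
  simp only [mulVec, dotProduct, blockGram_apply, add_mul, Finset.sum_add_distrib, hblock]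
  simp [Finset.mul_sum]

variable [Nonempty ι] [Nonempty κ] {p q r : K}

theorem finrank_ker_blockGram_lt (hpq : p ≠ q)
    (hone : p + (Fintype.card κ - 1) * q + (Fintype.card ι - 1) * Fintype.card κ * r ≠ 0) :
    finrank K (LinearMap.ker (blockGram p q r : Matrix (ι × κ) (ι × κ) K).mulVecLin) <
      Fintype.card ι := by
  set W := LinearMap.range (LinearMap.funLeft K K (Prod.fst : ι × κ → ι))
  have hW : finrank K W = Fintype.card ι := by
    rw [LinearMap.finrank_range_of_inj
      (LinearMap.funLeft_injective_of_surjective _ _ _ Prod.fst_surjective),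
      finrank_fintype_fun_eq_card]
  have hker : LinearMap.ker (blockGram p q r).mulVecLin ≤ W := by
    intro c hc
    obtain ⟨k₀⟩ := ‹Nonempty κ›
    refine ⟨fun α => c (α, k₀), funext fun i => ?_⟩
    have h₁ := congrFun (LinearMap.mem_ker.mp hc) i
    have h₂ := congrFun (LinearMap.mem_ker.mp hc) (i.1, k₀)
    simp only [Matrix.mulVecLin_apply, blockGram_mulVec_apply, Pi.zero_apply] at h₁ h₂
    change c (i.1, k₀) = c i
    exact mul_left_cancel₀ (sub_ne_zero.mpr hpq) (by linear_combination h₂ - h₁)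
  have hone_mem : (1 : ι × κ → K) ∈ W := ⟨1, rfl⟩
  have hone_nmem : (1 : ι × κ → K) ∉ LinearMap.ker (blockGram p q r).mulVecLin := by
    obtain ⟨α⟩ := ‹Nonempty ι›
    obtain ⟨k⟩ := ‹Nonempty κ›
    intro h
    apply hone
    have := congrFun (LinearMap.mem_ker.mp h) (α, k)
    simp only [Matrix.mulVecLin_apply, blockGram_mulVec_apply, Pi.one_apply, Finset.sum_const,
      Finset.card_univ, Fintype.card_prod, nsmul_eq_mul, mul_one, Pi.zero_apply] at this
    push_cast at this
    linear_combination this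
  exact hW ▸ Submodule.finrank_lt_finrank_of_lt
    (SetLike.lt_iff_le_and_exists.mpr ⟨hker, 1, hone_mem, hone_nmem⟩)

theorem card_mul_sub_one_lt_rank_blockGram (hpq : p ≠ q)
    (hone : p + (Fintype.card κ - 1) * q + (Fintype.card ι - 1) * Fintype.card κ * r ≠ 0) :
    Fintype.card ι * (Fintype.card κ - 1) <
      (blockGram p q r : Matrix (ι × κ) (ι × κ) K).rank := by
  have hrank := LinearMap.finrank_range_add_finrank_ker
    (blockGram p q r : Matrix (ι × κ) (ι × κ) K).mulVecLin
  rw [finrank_fintype_fun_eq_card, Fintype.card_prod] at hrank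
  have hker := finrank_ker_blockGram_lt hpq hone
  have hle : Fintype.card ι ≤ Fintype.card ι * Fintype.card κ :=
    Nat.le_mul_of_pos_right _ Fintype.card_pos
  rw [Matrix.rank, Nat.mul_sub_one]
  omega

end BlockGram

section TraceGram

open Module Submodule

variable {K n ι : Type*} [Field K] [Fintype n] [DecidableEq n]

def traceGram (E : ι → Matrix n n K) : Matrix ι ι K :=
  Matrix.of fun i j => (E i * E j).trace

-- The Gram matrix is `c ↦ ∑ cⱼ Eⱼ` followed by `X ↦ (tr (E i * X))ᵢ`.
theorem rank_traceGram_le_finrank_span [Fintype ι] (E : ι → Matrix n n K) :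
    (traceGram E).rank ≤ finrank K (span K (Set.range E)) := by
  let φ : Matrix n n K →ₗ[K] ι → K :=
    LinearMap.pi fun i => Matrix.traceLinearMap n K K ∘ₗ LinearMap.mulLeft K (E i)
  have hfactor : (traceGram E).mulVecLin = φ ∘ₗ Fintype.linearCombination K E := by
    ext c i
    simp [φ, traceGram, Matrix.mulVec, dotProduct, Fintype.linearCombination_apply, mul_comm]
  rw [Matrix.rank, hfactor, LinearMap.range_comp, ← Fintype.range_linearCombination]
  exact finrank_map_le _ _

theorem span_eq_top_of_card_sq_le_rank_traceGram [Fintype ι] {E : ι → Matrix n n K}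
    (h : Fintype.card n ^ 2 ≤ (traceGram E).rank) : span K (Set.range E) = ⊤ := by
  refine eq_top_of_finrank_eq (le_antisymm (finrank_le _) ?_)
  rw [finrank_matrix, finrank_self, mul_one, ← sq]
  exact h.trans (rank_traceGram_le_finrank_span E)

theorem eq_zero_of_forall_trace_mul_eq_zero {E : ι → Matrix n n K}
    (hE : span K (Set.range E) = ⊤) {D : Matrix n n K} (hD : ∀ i, (E i * D).trace = 0) :
    D = 0 := by
  have hzero : Matrix.traceLinearMap n K K ∘ₗ LinearMap.mulRight K D = 0 :=
    LinearMap.ext_on_range hE (by simpa using hD)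
  rw [Matrix.ext_iff_trace_mul_left]
  intro X
  simpa using LinearMap.congr_fun hzero X

variable [Fintype ι] {κ : Type*} [Fintype κ] [DecidableEq ι] [DecidableEq κ]
  {E : ι → κ → Matrix n n K} {p q r τ : K} {ρ : Matrix n n K}

theorem sum_trace_mul_smul_eq (hspan : span K (Set.range (Function.uncurry E)) = ⊤)
    (hgram : traceGram (Function.uncurry E) = blockGram p q r)
    (hsum : ∀ α, ∑ k, E α k = 1) (htr : ∀ α k, (E α k).trace = τ) (hτ : τ ≠ 0)
    (hρ : ρ.trace = 1) :
    ∑ α, ∑ k, (E α k * ρ).trace • E α k =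
      (p - q) • ρ + ((r * Fintype.card ι + q - r) / τ) • 1 := by
  set y : ι × κ → K := fun i => (E i.1 i.2 * ρ).trace
  have hrow (α : ι) : ∑ l, y (α, l) = 1 := by
    simp only [y, ← Matrix.trace_sum, ← Matrix.sum_mul, hsum, one_mul, hρ]
  have hgram_mul (i : ι × κ) :
      (E i.1 i.2 * ∑ j, y j • E j.1 j.2).trace = (blockGram p q r *ᵥ y) i := by
    simp [Matrix.mul_sum, Matrix.trace_sum, ← hgram, traceGram, Function.uncurry_def,
      Matrix.mulVec, dotProduct, mul_comm]
  rw [← sub_eq_zero, ← Fintype.sum_prod_type']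
  refine eq_zero_of_forall_trace_mul_eq_zero hspan fun i => ?_
  rw [Function.uncurry_def, Matrix.mul_sub, Matrix.trace_sub, hgram_mul,
    blockGram_mulVec_apply, hrow, Fintype.sum_prod_type, Finset.sum_congr rfl fun α _ => hrow α]
  simp only [Matrix.mul_add, Matrix.trace_add, Matrix.mul_smul, Matrix.trace_smul,
    htr, Finset.sum_const, Finset.card_univ, smul_eq_mul, nsmul_eq_mul, mul_one]
  field_simp
  ring

theorem sum_sq_trace_mul_eq (hspan : span K (Set.range (Function.uncurry E)) = ⊤)
    (hgram : traceGram (Function.uncurry E) = blockGram p q r)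
    (hsum : ∀ α, ∑ k, E α k = 1) (htr : ∀ α k, (E α k).trace = τ) (hτ : τ ≠ 0)
    (hρ : ρ.trace = 1) :
    ∑ α, ∑ k, (E α k * ρ).trace ^ 2 =
      (p - q) * (ρ * ρ).trace + (r * Fintype.card ι + q - r) / τ := by
  have h := congrArg (fun X => (X * ρ).trace)
    (sum_trace_mul_smul_eq hspan hgram hsum htr hτ hρ)
  simpa [Matrix.sum_mul, Matrix.trace_sum, sq, Matrix.add_mul, hρ] using h

end TraceGram

theorem Matrix.trace_mul_self_fin_one {R : Type*} [Semiring R] (A : Matrix (Fin 1) (Fin 1) R) :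
    (A * A).trace = A.trace ^ 2 := by
  simp [Matrix.trace_fin_one, Matrix.mul_apply, sq]

section POVM

variable {d N M : ℕ} {x : ℝ} {E : Fin N → Fin M → Matrix (Fin d) (Fin d) ℂ}

theorem IsNMPOVM.pos_dim_and_two_le (hE : IsNMPOVM d N M x E) : 0 < d ∧ 2 ≤ M := by
  obtain ⟨hlow, hup⟩ := hE.2.2.2.2.2.2
  have hup' := hup.trans (min_le_right _ _)
  refine ⟨Nat.pos_of_ne_zero ?_, ?_⟩
  · rintro rfl
    simp at hlow hup'
    linarith
  · by_contra! h
    interval_cases M <;> simp at hlow hup' <;> linarith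

theorem IsNMPOVM.traceGram_eq (hE : IsNMPOVM d N M x E) :
    traceGram (Function.uncurry E) =
      blockGram (x : ℂ) ((((d : ℝ) - M * x) / (M * ((M : ℝ) - 1)) : ℝ) : ℂ)
        (((d : ℝ) / M ^ 2 : ℝ) : ℂ) := by
  ext ⟨α, k⟩ ⟨β, l⟩
  by_cases hαβ : α = β
  · subst hαβ
    by_cases hkl : k = l
    · subst hkl
      simp [traceGram, blockGram, hE.2.2.2.1]
    · simp [traceGram, blockGram, hkl, hE.2.2.2.2.1 α k l hkl]
  · simp [traceGram, blockGram, hαβ, hE.2.2.2.2.2.1 α β k l hαβ]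

theorem IsInfoComplete.sq_eq (h : IsInfoComplete d N M) (hM : 1 ≤ M) :
    d ^ 2 = N * (M - 1) + 1 := by
  rw [IsInfoComplete] at h
  have : ((d ^ 2 : ℕ) : ℝ) = ((N * (M - 1) + 1 : ℕ) : ℝ) := by
    push_cast [Nat.cast_sub hM]
    linear_combination -h
  exact_mod_cast this

theorem IsNMPOVM.span_eq_top (hE : IsNMPOVM d N M x E) (hIC : IsInfoComplete d N M)
    (hN : 0 < N) : Submodule.span ℂ (Set.range (Function.uncurry E)) = ⊤ := by
  obtain ⟨hd, hM⟩ := hE.pos_dim_and_two_le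
  have : Nonempty (Fin N) := Fin.pos_iff_nonempty.mp hN
  have : Nonempty (Fin M) := Fin.pos_iff_nonempty.mp (by omega)
  have hM1 : (M : ℝ) - 1 ≠ 0 := by
    have : (2 : ℝ) ≤ M := by exact_mod_cast hM
    linarith
  set q : ℝ := ((d : ℝ) - M * x) / (M * ((M : ℝ) - 1)) with hq
  set r : ℝ := (d : ℝ) / M ^ 2 with hr
  have hpq : x ≠ q := by
    have hx : r < x := hE.2.2.2.2.2.2.1
    rw [hr, div_lt_iff₀ (by positivity)] at hx
    intro h
    rw [hq] at h
    field_simp at h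
    nlinarith
  have hone : x + (M - 1) * q + (N - 1) * M * r ≠ 0 := by
    have : x + (M - 1) * q + (N - 1) * M * r = N * d / M := by
      rw [hq, hr]
      field_simp
      ring
    exact this.trans_ne (by positivity)
  have hgram : traceGram (Function.uncurry E) = blockGram (x : ℂ) q r := hE.traceGram_eq
  refine span_eq_top_of_card_sq_le_rank_traceGram ?_
  rw [hgram, Fintype.card_fin, hIC.sq_eq (by omega)]
  simpa using card_mul_sub_one_lt_rank_blockGram (ι := Fin N) (κ := Fin M)
    (Complex.ofReal_injective.ne hpq) (by simp only [Fintype.card_fin]; exact_mod_cast hone)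

end POVM

/-- For an informationally complete (N,M)-POVM with efficiency
parameter x, the coincidence index C(x,ρ) = Σ_{α,k} (tr(E_{α,k} ρ))² equals
(d(M²x − d)·tr(ρ²) + d³ − M²x)/(d·M(M−1)) for every density matrix ρ. -/
theorem coincidence_index_eq (d N M : ℕ) (x : ℝ)
    (E : Fin N → Fin M → Matrix (Fin d) (Fin d) ℂ)
    (hE : IsNMPOVM d N M x E) (hIC : IsInfoComplete d N M)
    (ρ : Matrix (Fin d) (Fin d) ℂ) (hρ : IsDensityMatrix ρ) :
    ∑ α, ∑ k, ((E α k * ρ).trace) ^ 2 =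
      ((d : ℂ) * ((M : ℂ) ^ 2 * (x : ℂ) - (d : ℂ)) * (ρ * ρ).trace
          + (d : ℂ) ^ 3 - (M : ℂ) ^ 2 * (x : ℂ)) /
        ((d : ℂ) * ((M : ℂ) * ((M : ℂ) - 1))) := by
  obtain ⟨hd, hM⟩ := hE.pos_dim_and_two_le
  rcases N.eq_zero_or_pos with rfl | hN
  -- With no POVMs the spanning argument fails, but then `d = 1` and `tr ρ² = (tr ρ)² = 1`.
  · obtain rfl : d = 1 := by simpa using hIC.sq_eq (by omega)
    simp [Matrix.trace_mul_self_fin_one, hρ.2]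
  have hτ : (((d : ℝ) / M : ℝ) : ℂ) ≠ 0 := by
    exact_mod_cast (by positivity : (d : ℝ) / M ≠ 0)
  have hM1 : (M : ℂ) - 1 ≠ 0 := by
    rw [sub_ne_zero]
    exact_mod_cast (by omega : M ≠ 1)
  have hIC' : ((M : ℂ) - 1) * N = (d : ℂ) ^ 2 - 1 := by
    simpa using congrArg ((↑) : ℝ → ℂ) hIC
  rw [sum_sq_trace_mul_eq (hE.span_eq_top hIC hN) hE.traceGram_eq hE.2.1 hE.2.2.1 hτ hρ.2,
    Fintype.card_fin]
  push_cast
  field_simp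
  linear_combination (d : ℂ) * hIC'
end

section
/- Let {E_{α,k} : k=1,…,M}, α=1,…,N, be an informationally complete (N,M)-POVM on ℂ^d with efficiency parameter x. Then for every density matrix ρ on ℂ^d, Σ_{α=1}^{N} Σ_{k=1}^{M} (tr(E_{α,k} ρ))² ≤ ((d−1)/d)·(d² + M²x)/(M(M−1)). -/
/-!
Put `ρ₀ = ρ - I/d` and `v α k = tr (E α k ρ₀) = tr (E α k ρ) - 1/M`, so that `∑ k, v α k = 0`
and `∑ (tr (E α k ρ))² = ∑ v² + N/M`. Because the Gram matrix `tr (E α k E β l)` is constant off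
the diagonal blocks and constant off the diagonal within each block, it acts on such `v` as
multiplication by `c = (M²x - d)/(M(M-1))`. For `B = ∑ v α k • E α k` this gives
`tr (B ρ₀) = ∑ v²` and `tr (B B) = c ∑ v²`, and `0 ≤ tr ((B - c ρ₀)²)` yields the Bessel-type
inequality `∑ v² ≤ c tr (ρ₀²) = c (tr ρ² - 1/d) ≤ c (1 - 1/d)`. Informational completeness,
`N = (d² - 1)/(M - 1)`, turns `c (1 - 1/d) + N/M` into the stated bound.
-/

open scoped BigOperators ComplexOrder
open Matrix

section
variable {𝕜 n : Type*} [RCLike 𝕜] [Fintype n] [DecidableEq n] {A : Matrix n n 𝕜}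

theorem Matrix.IsHermitian.trace_mul_self_eq_sum_sq_eigenvalues (hA : A.IsHermitian) :
    (A * A).trace = ∑ i, ((hA.eigenvalues i ^ 2 : ℝ) : 𝕜) := by
  have hU : star (hA.eigenvectorUnitary : Matrix n n 𝕜) * hA.eigenvectorUnitary = 1 :=
    Unitary.star_mul_self_of_mem hA.eigenvectorUnitary.2
  have hspec := hA.spectral_theorem
  set D : Matrix n n 𝕜 := diagonal (RCLike.ofReal ∘ hA.eigenvalues)
  calc (A * A).trace = (Unitary.conjStarAlgAut 𝕜 _ hA.eigenvectorUnitary (D * D)).trace := by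
        rw [map_mul, ← hspec]
    _ = _ := by
        rw [Unitary.conjStarAlgAut_apply, trace_mul_cycle, hU, one_mul, diagonal_mul_diagonal,
          trace_diagonal]
        simp [sq]

theorem Matrix.PosSemidef.re_trace_mul_self_le (hA : A.PosSemidef) :
    RCLike.re (A * A).trace ≤ RCLike.re A.trace ^ 2 := by
  rw [hA.1.trace_mul_self_eq_sum_sq_eigenvalues, hA.1.trace_eq_sum_eigenvalues]
  simp only [map_sum, RCLike.ofReal_re]
  exact Finset.sum_sq_le_sq_sum_of_nonneg fun i _ => hA.eigenvalues_nonneg i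

end

theorem Matrix.IsHermitian.re_trace_mul_self_nonneg {n : Type*} [Fintype n] {A : Matrix n n ℂ}
    (hA : A.IsHermitian) : 0 ≤ (A * A).trace.re := by
  have := (posSemidef_conjTranspose_mul_self A).trace_nonneg
  rw [hA.eq] at this
  exact (Complex.nonneg_iff.mp this).1

theorem Matrix.sum_sq_re_trace_mul_le_of_gram_eigenvector {ι n : Type*} [Fintype ι] [Fintype n]
    {F : ι → Matrix n n ℂ} (hF : ∀ i, (F i).IsHermitian) {A : Matrix n n ℂ} (hA : A.IsHermitian)
    {c : ℝ} (hc : 0 < c)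
    (hgram : ∀ i, ∑ j, (F i * F j).trace.re * (F j * A).trace.re = c * (F i * A).trace.re) :
    ∑ i, (F i * A).trace.re ^ 2 ≤ c * (A * A).trace.re := by
  set v : ι → ℝ := fun i => (F i * A).trace.re
  obtain ⟨B, hB⟩ : ∃ B : Matrix n n ℂ, B = ∑ i, v i • F i := ⟨_, rfl⟩
  have hBA : (B * A).trace.re = ∑ i, v i ^ 2 := by
    simp [hB, Finset.sum_mul, trace_sum, sq, v]
  have hAB : (A * B).trace.re = ∑ i, v i ^ 2 := by rw [trace_mul_comm, hBA]
  have hFB (i : ι) : (F i * B).trace.re = c * v i := by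
    simpa [hB, Finset.mul_sum, trace_sum, mul_comm] using hgram i
  have hBB : (B * B).trace.re = c * ∑ i, v i ^ 2 := by
    nth_rw 1 [hB]
    simp [Finset.sum_mul, trace_sum, hFB, Finset.mul_sum, sq, mul_left_comm]
  have hX : (B - c • A).IsHermitian := by
    rw [hB]
    exact (isSelfAdjoint_sum _ fun i _ => (hF i).smul (.all (v i))).sub (hA.smul (.all c))
  -- `0 ≤ tr ((B - c A)²) = c ∑ vᵢ² - 2 c ∑ vᵢ² + c² tr (A²)`
  have h0 := hX.re_trace_mul_self_nonneg
  simp only [sub_mul, mul_sub, smul_mul_assoc, mul_smul_comm, trace_sub, trace_smul,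
    Complex.sub_re, Complex.real_smul, Complex.re_ofReal_mul, hBA, hAB, hBB] at h0
  nlinarith

theorem sum_ite_ite_mul_eq {ι κ : Type*} [Fintype ι] [Fintype κ] [DecidableEq ι] [DecidableEq κ]
    (a b e : ℝ) (v : ι → κ → ℝ) (hv : ∀ j, ∑ l, v j l = 0) (i : ι) (k : κ) :
    ∑ j, ∑ l, (if i = j then if k = l then a else b else e) * v j l = (a - b) * v i k := by
  have hrow (l : κ) :
      (if k = l then a else b) * v i l = b * v i l + if k = l then (a - b) * v i l else 0 := by
    split_ifs <;> ring
  rw [Fintype.sum_eq_single i fun j hj => by simp [Ne.symm hj, ← Finset.mul_sum, hv]]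
  simp only [if_true, hrow, Finset.sum_add_distrib, ← Finset.mul_sum, hv, Finset.sum_ite_eq,
    Finset.mem_univ]
  ring

namespace IsDensityMatrix

variable {ι : Type*} [Fintype ι] {ρ : Matrix ι ι ℂ}

theorem card_ne_zero (hρ : IsDensityMatrix ρ) : Fintype.card ι ≠ 0 := by
  intro h
  have := Fintype.card_eq_zero_iff.mp h
  simpa [trace] using hρ.2

theorem isHermitian_sub_smul_one [DecidableEq ι] (hρ : IsDensityMatrix ρ) (r : ℝ) :
    (ρ - r • 1).IsHermitian :=
  hρ.1.1.sub (isHermitian_one.smul (.all r))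

theorem trace_sub_smul_one [DecidableEq ι] (hρ : IsDensityMatrix ρ) :
    (ρ - (Fintype.card ι : ℝ)⁻¹ • 1).trace = 0 := by
  have := hρ.card_ne_zero
  rw [trace_sub, trace_smul, trace_one, hρ.2]
  simp [this]

theorem re_trace_mul_self_sub_smul_one_le [DecidableEq ι] (hρ : IsDensityMatrix ρ) :
    ((ρ - (Fintype.card ι : ℝ)⁻¹ • 1) * (ρ - (Fintype.card ι : ℝ)⁻¹ • 1)).trace.re ≤
      1 - (Fintype.card ι : ℝ)⁻¹ := by
  have hn : (Fintype.card ι : ℝ) ≠ 0 := by exact_mod_cast hρ.card_ne_zero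
  have hpure := hρ.1.re_trace_mul_self_le
  rw [hρ.2] at hpure
  simp only [sub_mul, mul_sub, smul_mul_assoc, mul_smul_comm, one_mul, mul_one,
    trace_sub, trace_smul, trace_one, hρ.2, Complex.sub_re, Complex.real_smul,
    Complex.re_ofReal_mul, Complex.ofReal_re, Complex.natCast_re, inv_mul_cancel₀ hn]
  simp only [RCLike.one_re, one_pow, RCLike.re_to_complex] at hpure
  linarith

end IsDensityMatrix

/-- The eigenvalue of the frame operator `A ↦ ∑ α k, tr (E α k * A) • E α k` of an
`(N,M)`-POVM on traceless matrices. -/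
noncomputable def frameConstant (d M : ℕ) (x : ℝ) : ℝ :=
  ((M : ℝ) ^ 2 * x - d) / (M * ((M : ℝ) - 1))

namespace IsNMPOVM

variable {d N M : ℕ} {x : ℝ} {E : Fin N → Fin M → Matrix (Fin d) (Fin d) ℂ}

theorem div_sq_lt_div (hE : IsNMPOVM d N M x E) : (d : ℝ) / M ^ 2 < d / M :=
  hE.2.2.2.2.2.2.1.trans_le (hE.2.2.2.2.2.2.2.trans (min_le_right _ _))

theorem one_lt_M (hE : IsNMPOVM d N M x E) : 1 < (M : ℝ) := by
  have h := hE.div_sq_lt_div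
  by_contra! hM
  have : M ≤ 1 := by exact_mod_cast hM
  interval_cases M <;> simp at h

theorem d_pos (hE : IsNMPOVM d N M x E) : 0 < (d : ℝ) := by
  have h := hE.div_sq_lt_div
  by_contra! hd
  obtain rfl : d = 0 := by exact_mod_cast hd.antisymm d.cast_nonneg
  simp at h

theorem sum_re_trace_mul (hE : IsNMPOVM d N M x E) (α : Fin N) (A : Matrix (Fin d) (Fin d) ℂ) :
    ∑ k, (E α k * A).trace.re = A.trace.re := by
  rw [← Complex.re_sum, ← trace_sum, ← Finset.sum_mul, hE.2.1 α, one_mul]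

theorem re_trace_mul (hE : IsNMPOVM d N M x E) (α β : Fin N) (k l : Fin M) :
    (E α k * E β l).trace.re = if α = β then if k = l then x
      else ((d : ℝ) - M * x) / (M * ((M : ℝ) - 1)) else (d : ℝ) / M ^ 2 := by
  obtain ⟨-, -, -, hsq, hsame, hdiff, -⟩ := hE
  split_ifs with hαβ hkl
  · subst hαβ hkl; rw [hsq, Complex.ofReal_re]
  · subst hαβ; rw [hsame α k l hkl, Complex.ofReal_re]
  · rw [hdiff α β k l hαβ, Complex.ofReal_re]

theorem re_trace_mul_sub_smul_one (hE : IsNMPOVM d N M x E) (α : Fin N) (k : Fin M)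
    (ρ : Matrix (Fin d) (Fin d) ℂ) :
    (E α k * (ρ - (d : ℝ)⁻¹ • 1)).trace.re = (E α k * ρ).trace.re - (M : ℝ)⁻¹ := by
  have hd := hE.d_pos.ne'
  rw [mul_sub, mul_smul_comm, mul_one, trace_sub, trace_smul, hE.2.2.1 α k, Complex.sub_re,
    Complex.real_smul, ← Complex.ofReal_mul, Complex.ofReal_re]
  field_simp

theorem frameConstant_pos (hE : IsNMPOVM d N M x E) : 0 < frameConstant d M x := by
  have hM := hE.one_lt_M
  have hx := hE.2.2.2.2.2.2.1
  rw [div_lt_iff₀ (by positivity)] at hx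
  exact div_pos (by linarith) (by nlinarith)

theorem sum_sq_re_trace_mul_le (hE : IsNMPOVM d N M x E) {A : Matrix (Fin d) (Fin d) ℂ}
    (hA : A.IsHermitian) (htr : A.trace = 0) :
    ∑ α, ∑ k, (E α k * A).trace.re ^ 2 ≤ frameConstant d M x * (A * A).trace.re := by
  have hM := hE.one_lt_M
  have hM₁ : (M : ℝ) - 1 ≠ 0 := by linarith
  have hrow (α : Fin N) : ∑ k, (E α k * A).trace.re = 0 := by
    rw [hE.sum_re_trace_mul, htr, Complex.zero_re]
  rw [← Fintype.sum_prod_type']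
  refine sum_sq_re_trace_mul_le_of_gram_eigenvector (F := fun i : Fin N × Fin M => E i.1 i.2)
    (fun i => (hE.1 i.1 i.2).1) hA hE.frameConstant_pos fun i => ?_
  simp only [Fintype.sum_prod_type, hE.re_trace_mul]
  rw [sum_ite_ite_mul_eq _ _ _ _ hrow, frameConstant]
  congr 1
  field_simp
  ring

theorem sum_sq_re_trace_mul_eq (hE : IsNMPOVM d N M x E) {ρ : Matrix (Fin d) (Fin d) ℂ}
    (htr : (ρ - (d : ℝ)⁻¹ • 1).trace = 0) :
    ∑ α, ∑ k, (E α k * ρ).trace.re ^ 2 =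
      ∑ α, ∑ k, (E α k * (ρ - (d : ℝ)⁻¹ • 1)).trace.re ^ 2 + N / M := by
  have hrow (α : Fin N) : ∑ k, (E α k * (ρ - (d : ℝ)⁻¹ • 1)).trace.re = 0 := by
    rw [hE.sum_re_trace_mul, htr, Complex.zero_re]
  have hsq (α : Fin N) (k : Fin M) : (E α k * ρ).trace.re ^ 2 =
      (E α k * (ρ - (d : ℝ)⁻¹ • 1)).trace.re ^ 2
        + 2 / M * (E α k * (ρ - (d : ℝ)⁻¹ • 1)).trace.re + 1 / M ^ 2 := by
    rw [hE.re_trace_mul_sub_smul_one]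
    field_simp
    ring
  simp only [hsq, Finset.sum_add_distrib, ← Finset.mul_sum, hrow, Finset.sum_const,
    Finset.card_univ, Fintype.card_fin, nsmul_eq_mul]
  field_simp
  ring

end IsNMPOVM

/-- For an informationally complete (N,M)-POVM with efficiency
parameter x and any density matrix ρ,
Σ_{α,k} (tr(E_{α,k} ρ))² ≤ ((d−1)/d)·(d² + M²x)/(M(M−1)). -/
theorem coincidence_index_le (d N M : ℕ) (x : ℝ)
    (E : Fin N → Fin M → Matrix (Fin d) (Fin d) ℂ)
    (hE : IsNMPOVM d N M x E) (hIC : IsInfoComplete d N M)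
    (ρ : Matrix (Fin d) (Fin d) ℂ) (hρ : IsDensityMatrix ρ) :
    ∑ α, ∑ k, ((E α k * ρ).trace.re) ^ 2 ≤
      ((d : ℝ) - 1) / d * (((d : ℝ) ^ 2 + (M : ℝ) ^ 2 * x) / (M * ((M : ℝ) - 1))) := by
  have hM := hE.one_lt_M
  have hd := hE.d_pos
  have htr : (ρ - (d : ℝ)⁻¹ • 1).trace = 0 := by
    simpa only [Fintype.card_fin] using hρ.trace_sub_smul_one
  have hpure : ((ρ - (d : ℝ)⁻¹ • 1) * (ρ - (d : ℝ)⁻¹ • 1)).trace.re ≤ 1 - (d : ℝ)⁻¹ := by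
    simpa only [Fintype.card_fin] using hρ.re_trace_mul_self_sub_smul_one_le
  have hframe := hE.sum_sq_re_trace_mul_le (hρ.isHermitian_sub_smul_one _) htr
  have hN : (N : ℝ) = ((d : ℝ) ^ 2 - 1) / (M - 1) := by
    rw [eq_div_iff (by linarith), ← hIC, mul_comm]
  calc ∑ α, ∑ k, (E α k * ρ).trace.re ^ 2
      = ∑ α, ∑ k, (E α k * (ρ - (d : ℝ)⁻¹ • 1)).trace.re ^ 2 + N / M :=
        hE.sum_sq_re_trace_mul_eq htr
    _ ≤ frameConstant d M x * (1 - (d : ℝ)⁻¹) + N / M := by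
        gcongr
        exact hframe.trans (mul_le_mul_of_nonneg_left hpure hE.frameConstant_pos.le)
    _ = _ := by
        rw [frameConstant, hN]
        field_simp
        ring
end

section
/- Let ρ_A and ρ_B be density matrices on ℂ^{d_A} and ℂ^{d_B}, let a ∈ ℝ^m and b ∈ ℝ^n, let {E^A_{α,k}} be an (N_A,M_A)-POVM on ℂ^{d_A} and {E^B_{β,l}} an (N_B,M_B)-POVM on ℂ^{d_B}. Then for the product state ρ_A ⊗ ρ_B one has P(ρ_A ⊗ ρ_B) = τσᵀ, so Q_{a,b}(ρ_A ⊗ ρ_B) is the rank-one matrix (a;τ)(bᵀ, σᵀ), and ‖Q_{a,b}(ρ_A ⊗ ρ_B)‖_tr = √(|a|² + |τ|²) · √(|b|² + |σ|²), where |·| denotes the Euclidean norm. -/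
open scoped BigOperators ComplexOrder
open Matrix

open Kronecker

/-- Partial trace over the second factor. -/
noncomputable def ptraceB {dA dB : ℕ} (ρ : Matrix (Fin dA × Fin dB) (Fin dA × Fin dB) ℂ) :
    Matrix (Fin dA) (Fin dA) ℂ :=
  Matrix.of fun i j => ∑ k, ρ (i, k) (j, k)

/-- Partial trace over the first factor. -/
noncomputable def ptraceA {dA dB : ℕ} (ρ : Matrix (Fin dA × Fin dB) (Fin dA × Fin dB) ℂ) :
    Matrix (Fin dB) (Fin dB) ℂ :=
  Matrix.of fun i j => ∑ k, ρ (k, i) (k, j)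

/-- A bipartite state is separable if it is a finite convex combination of
tensor products of local density matrices. -/
def SeparableState {dA dB : ℕ} (ρ : Matrix (Fin dA × Fin dB) (Fin dA × Fin dB) ℂ) : Prop :=
  ∃ (K : ℕ) (p : Fin K → ℝ) (ρA : Fin K → Matrix (Fin dA) (Fin dA) ℂ)
    (ρB : Fin K → Matrix (Fin dB) (Fin dB) ℂ),
    (∀ i, 0 ≤ p i) ∧ (∑ i, p i = 1) ∧
    (∀ i, IsDensityMatrix (ρA i)) ∧ (∀ i, IsDensityMatrix (ρB i)) ∧
    ρ = ∑ i, (p i : ℂ) • (ρA i ⊗ₖ ρB i)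

/-! For a product state the trace of `(E ⊗ F)(ρ_A ⊗ ρ_B)` factorises as `tr(Eρ_A) tr(Fρ_B)`, so
`P = τσᵀ` and `Q_{a,b}` is the rank-one matrix `u vᵀ` with `u = (a; τ)`, `v = (b; σ)`. The trace
norm of `u vᵀ` is `‖u‖ ‖v‖`: its Gram matrix is `‖u‖² v̄ vᵀ`, and since `(v̄ vᵀ)² = ‖v‖² v̄ vᵀ`, the
positive square root of the Gram matrix is `(‖u‖ / ‖v‖) v̄ vᵀ`, of trace `‖u‖ ‖v‖`. -/

section
open WithLp

theorem dotProduct_star_self_eq_norm_sq {ι : Type*} [Fintype ι] (v : ι → ℂ) :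
    star v ⬝ᵥ v = (‖toLp 2 v‖ : ℂ) ^ 2 := by
  rw [dotProduct_comm, ← EuclideanSpace.inner_toLp_toLp]
  exact inner_self_eq_norm_sq_to_K _

open scoped MatrixOrder in
theorem traceNorm_eq_re_trace_of_mul_self_eq {m n : Type*} [Fintype m] [Fintype n]
    [DecidableEq n] (X : Matrix m n ℂ) {B : Matrix n n ℂ} (hB : B.PosSemidef)
    (h : B * B = Xᴴ * X) : traceNorm X = B.trace.re := by
  have hX := posSemidef_conjTranspose_mul_self X
  have hsqrt : CFC.sqrt (Xᴴ * X) = cfc Real.sqrt (Xᴴ * X) :=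
    (CFC.sqrt_eq_real_sqrt _ hX.nonneg).trans (cfcₙ_eq_cfc (hf0 := Real.sqrt_zero))
  rw [← CFC.sqrt_unique h hB.nonneg, hsqrt, hX.1.cfc_eq, IsHermitian.cfc,
    Unitary.conjStarAlgAut_apply]
  rfl

theorem traceNorm_vecMulVec {ι κ : Type*} [Fintype ι] [Fintype κ] [DecidableEq κ]
    (u : ι → ℂ) (v : κ → ℂ) :
    traceNorm (vecMulVec u v) = ‖toLp 2 u‖ * ‖toLp 2 v‖ := by
  rcases eq_or_ne v 0 with rfl | hv0
  · have h0 : vecMulVec u (0 : κ → ℂ) = 0 := by ext; simp [vecMulVec_apply]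
    rw [h0, traceNorm_eq_re_trace_of_mul_self_eq 0 PosSemidef.zero (by simp)]
    simp
  have hv : ‖toLp 2 v‖ ≠ 0 := by simpa using hv0
  have hW_sq : vecMulVec (star v) v * vecMulVec (star v) v =
      (‖toLp 2 v‖ : ℂ) ^ 2 • vecMulVec (star v) v := by
    rw [vecMulVec_mul_vecMulVec, dotProduct_comm, dotProduct_star_self_eq_norm_sq,
      vecMulVec_smul]
  have hgram : (vecMulVec u v)ᴴ * vecMulVec u v =
      (‖toLp 2 u‖ : ℂ) ^ 2 • vecMulVec (star v) v := by
    rw [conjTranspose_vecMulVec, vecMulVec_mul_vecMulVec, dotProduct_star_self_eq_norm_sq,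
      vecMulVec_smul]
  set c : ℂ := ((‖toLp 2 u‖ / ‖toLp 2 v‖ : ℝ) : ℂ) with hc_def
  have hc : 0 ≤ c := Complex.zero_le_real.2 (by positivity)
  have hB_sq : (c • vecMulVec (star v) v) * (c • vecMulVec (star v) v) =
      (vecMulVec u v)ᴴ * vecMulVec u v := by
    rw [hgram, smul_mul_smul_comm, hW_sq, smul_smul]
    congr 1
    push_cast [hc_def]
    field_simp
  rw [traceNorm_eq_re_trace_of_mul_self_eq _ ((posSemidef_vecMulVec_star_self v).smul hc) hB_sq,
    trace_smul, trace_vecMulVec, dotProduct_star_self_eq_norm_sq, hc_def, smul_eq_mul,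
    ← Complex.ofReal_pow, ← Complex.ofReal_mul, Complex.ofReal_re]
  field_simp

theorem trace_kronecker_mul_kronecker {R m n : Type*} [CommSemiring R] [Fintype m] [Fintype n]
    (A C : Matrix m m R) (B D : Matrix n n R) :
    ((A ⊗ₖ B) * (C ⊗ₖ D)).trace = (A * C).trace * (B * D).trace := by
  rw [← mul_kronecker_mul, trace_kronecker]

theorem fromBlocks_vecMulVec {R l m n o : Type*} [Mul R] (a : l → R) (t : m → R) (b : n → R)
    (s : o → R) :
    fromBlocks (vecMulVec a b) (vecMulVec a s) (vecMulVec t b) (vecMulVec t s) =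
      vecMulVec (Sum.elim a t) (Sum.elim b s) := by
  ext (i | i) (j | j) <;> rfl

theorem norm_toLp_sumElim_ofReal {m ι : Type*} [Fintype m] [Fintype ι] (a : m → ℝ)
    (τ : ι → ℂ) :
    ‖toLp 2 (Sum.elim (fun i => (a i : ℂ)) τ)‖ = √(∑ i, a i ^ 2 + ∑ p, ‖τ p‖ ^ 2) := by
  simp [EuclideanSpace.norm_eq, Fintype.sum_sum_type]

end

theorem Q_of_product_state_general
    (dA dB NA MA NB MB m n : ℕ)
    (EA : Fin NA → Fin MA → Matrix (Fin dA) (Fin dA) ℂ)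
    (EB : Fin NB → Fin MB → Matrix (Fin dB) (Fin dB) ℂ)
    (a : Fin m → ℝ) (b : Fin n → ℝ)
    (ρA : Matrix (Fin dA) (Fin dA) ℂ) (ρB : Matrix (Fin dB) (Fin dB) ℂ) :
    (∀ (p : Fin NA × Fin MA) (q : Fin NB × Fin MB),
      ((EA p.1 p.2 ⊗ₖ EB q.1 q.2) * (ρA ⊗ₖ ρB)).trace =
        (EA p.1 p.2 * ρA).trace * (EB q.1 q.2 * ρB).trace) ∧
    (Matrix.fromBlocks
      (Matrix.of fun (i : Fin m) (j : Fin n) => ((a i : ℂ) * (b j : ℂ)))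
      (Matrix.of fun (i : Fin m) (q : Fin NB × Fin MB) =>
        (a i : ℂ) * (EB q.1 q.2 * ρB).trace)
      (Matrix.of fun (p : Fin NA × Fin MA) (j : Fin n) =>
        (EA p.1 p.2 * ρA).trace * (b j : ℂ))
      (Matrix.of fun (p : Fin NA × Fin MA) (q : Fin NB × Fin MB) =>
        ((EA p.1 p.2 ⊗ₖ EB q.1 q.2) * (ρA ⊗ₖ ρB)).trace) =
      Matrix.vecMulVec
        (Sum.elim (fun i : Fin m => (a i : ℂ))
          (fun p : Fin NA × Fin MA => (EA p.1 p.2 * ρA).trace))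
        (Sum.elim (fun j : Fin n => (b j : ℂ))
          (fun q : Fin NB × Fin MB => (EB q.1 q.2 * ρB).trace))) ∧
    traceNorm (Matrix.fromBlocks
      (Matrix.of fun (i : Fin m) (j : Fin n) => ((a i : ℂ) * (b j : ℂ)))
      (Matrix.of fun (i : Fin m) (q : Fin NB × Fin MB) =>
        (a i : ℂ) * (EB q.1 q.2 * ρB).trace)
      (Matrix.of fun (p : Fin NA × Fin MA) (j : Fin n) =>
        (EA p.1 p.2 * ρA).trace * (b j : ℂ))
      (Matrix.of fun (p : Fin NA × Fin MA) (q : Fin NB × Fin MB) =>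
        ((EA p.1 p.2 ⊗ₖ EB q.1 q.2) * (ρA ⊗ₖ ρB)).trace)) =
    Real.sqrt (∑ i, a i ^ 2 + ∑ p : Fin NA × Fin MA, ‖(EA p.1 p.2 * ρA).trace‖ ^ 2) *
    Real.sqrt (∑ j, b j ^ 2 + ∑ q : Fin NB × Fin MB, ‖(EB q.1 q.2 * ρB).trace‖ ^ 2) := by
  have hP : ∀ (p : Fin NA × Fin MA) (q : Fin NB × Fin MB),
      ((EA p.1 p.2 ⊗ₖ EB q.1 q.2) * (ρA ⊗ₖ ρB)).trace =
        (EA p.1 p.2 * ρA).trace * (EB q.1 q.2 * ρB).trace :=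
    fun _ _ => trace_kronecker_mul_kronecker _ _ _ _
  have hQ := fromBlocks_vecMulVec (fun i => (a i : ℂ))
    (fun p : Fin NA × Fin MA => (EA p.1 p.2 * ρA).trace) (fun j => (b j : ℂ))
    (fun q : Fin NB × Fin MB => (EB q.1 q.2 * ρB).trace)
  refine ⟨hP, ?_⟩
  simp only [hP]
  refine ⟨hQ, (congrArg traceNorm hQ).trans ?_⟩
  rw [traceNorm_vecMulVec, norm_toLp_sumElim_ofReal, norm_toLp_sumElim_ofReal]

/-- for a product state ρ_A ⊗ ρ_B, the correlation matrix
factorizes as P(ρ_A ⊗ ρ_B) = τσᵀ, so Q_{a,b}(ρ_A ⊗ ρ_B) is the rank-one matrix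
(a;τ)(bᵀ,σᵀ), and ‖Q_{a,b}(ρ_A ⊗ ρ_B)‖_tr = √(|a|²+|τ|²)·√(|b|²+|σ|²). -/
theorem Q_of_product_state
    (dA dB NA MA NB MB m n : ℕ) (xA xB : ℝ)
    (EA : Fin NA → Fin MA → Matrix (Fin dA) (Fin dA) ℂ)
    (EB : Fin NB → Fin MB → Matrix (Fin dB) (Fin dB) ℂ)
    (hEA : IsNMPOVM dA NA MA xA EA) (hEB : IsNMPOVM dB NB MB xB EB)
    (a : Fin m → ℝ) (b : Fin n → ℝ)
    (ρA : Matrix (Fin dA) (Fin dA) ℂ) (ρB : Matrix (Fin dB) (Fin dB) ℂ)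
    (hρA : IsDensityMatrix ρA) (hρB : IsDensityMatrix ρB) :
    (∀ (p : Fin NA × Fin MA) (q : Fin NB × Fin MB),
      ((EA p.1 p.2 ⊗ₖ EB q.1 q.2) * (ρA ⊗ₖ ρB)).trace =
        (EA p.1 p.2 * ρA).trace * (EB q.1 q.2 * ρB).trace) ∧
    (Matrix.fromBlocks
      (Matrix.of fun (i : Fin m) (j : Fin n) => ((a i : ℂ) * (b j : ℂ)))
      (Matrix.of fun (i : Fin m) (q : Fin NB × Fin MB) =>
        (a i : ℂ) * (EB q.1 q.2 * ρB).trace)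
      (Matrix.of fun (p : Fin NA × Fin MA) (j : Fin n) =>
        (EA p.1 p.2 * ρA).trace * (b j : ℂ))
      (Matrix.of fun (p : Fin NA × Fin MA) (q : Fin NB × Fin MB) =>
        ((EA p.1 p.2 ⊗ₖ EB q.1 q.2) * (ρA ⊗ₖ ρB)).trace) =
      Matrix.vecMulVec
        (Sum.elim (fun i : Fin m => (a i : ℂ))
          (fun p : Fin NA × Fin MA => (EA p.1 p.2 * ρA).trace))
        (Sum.elim (fun j : Fin n => (b j : ℂ))
          (fun q : Fin NB × Fin MB => (EB q.1 q.2 * ρB).trace))) ∧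
    traceNorm (Matrix.fromBlocks
      (Matrix.of fun (i : Fin m) (j : Fin n) => ((a i : ℂ) * (b j : ℂ)))
      (Matrix.of fun (i : Fin m) (q : Fin NB × Fin MB) =>
        (a i : ℂ) * (EB q.1 q.2 * ρB).trace)
      (Matrix.of fun (p : Fin NA × Fin MA) (j : Fin n) =>
        (EA p.1 p.2 * ρA).trace * (b j : ℂ))
      (Matrix.of fun (p : Fin NA × Fin MA) (q : Fin NB × Fin MB) =>
        ((EA p.1 p.2 ⊗ₖ EB q.1 q.2) * (ρA ⊗ₖ ρB)).trace)) =
    Real.sqrt (∑ i, a i ^ 2 + ∑ p : Fin NA × Fin MA, ‖(EA p.1 p.2 * ρA).trace‖ ^ 2) *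
    Real.sqrt (∑ j, b j ^ 2 + ∑ q : Fin NB × Fin MB, ‖(EB q.1 q.2 * ρB).trace‖ ^ 2) :=
  Q_of_product_state_general dA dB NA MA NB MB m n EA EB a b ρA ρB
end

section
/- Let ρ be a fully separable state on ℂ^{d_{A_1}} ⊗ ⋯ ⊗ ℂ^{d_{A_n}}, fix a subsystem A_q, let a ∈ ℝ^m and b ∈ ℝ^n be arbitrary vectors, and for each i let {E^{A_i}_{α,k}} be an informationally complete (N_{A_i},M_{A_i})-POVM on ℂ^{d_{A_i}} with efficiency parameter x_{A_i}. Then ‖Q_{a,b}(ρ_{A_1⋯Â_q⋯A_n})‖_tr ≤ √( (|a|² + (d_{A_q}−1)(d_{A_q}² + M_{A_q}² x_{A_q})/(d_{A_q} M_{A_q}(M_{A_q}−1))) · (|b|² + ∏_{i≠q} ((d_{A_i}−1)/d_{A_i})·(d_{A_i}² + M_{A_i}² x_{A_i})/(M_{A_i}(M_{A_i}−1))) ). -/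
open scoped BigOperators ComplexOrder
open Matrix

/-- Tensor (Kronecker) product of a family of matrices, one per subsystem. -/
def famKron {nn : ℕ} {d : Fin nn → ℕ}
    (A : ∀ i, Matrix (Fin (d i)) (Fin (d i)) ℂ) :
    Matrix (∀ i, Fin (d i)) (∀ i, Fin (d i)) ℂ :=
  Matrix.of fun f g => ∏ i, A i (f i) (g i)

/-- An n-partite state is fully separable if it is a finite convex combination
of tensor products of local density matrices. -/
def FullySeparable {nn : ℕ} {d : Fin nn → ℕ}
    (ρ : Matrix (∀ i, Fin (d i)) (∀ i, Fin (d i)) ℂ) : Prop :=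
  ∃ (K : ℕ) (p : Fin K → ℝ)
    (ρs : Fin K → ∀ i, Matrix (Fin (d i)) (Fin (d i)) ℂ),
    (∀ j, 0 ≤ p j) ∧ (∑ j, p j = 1) ∧
    (∀ j i, IsDensityMatrix (ρs j i)) ∧
    ρ = ∑ j, (p j : ℂ) • famKron (ρs j)
/-- Build a family from a distinguished value at index `q` and values at all
other indices. -/
def famWith {nn : ℕ} (F : Fin nn → Type*) (q : Fin nn) (xq : F q)
    (y : ∀ i, i ≠ q → F i) : ∀ i, F i :=
  fun i => if h : i = q then h ▸ xq else y i h

/-!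
Write `ρ = ∑ⱼ pⱼ ⨂ᵢ ρⱼⁱ`. Then `Q_{a,b}(ρ) = L Rᴴ`, where the `j`-th column of `L` is
`√pⱼ (a, τⱼ)` and that of `R` is `√pⱼ (b, σⱼ)`, with `τⱼ` the outcome probabilities of `ρⱼ^{A_q}`
and `σⱼ` the tensor product of the outcome probabilities of the other factors. Pairing the
singular vectors of `L Rᴴ` through a contraction and applying Cauchy–Schwarz gives
`‖L Rᴴ‖_tr ≤ ‖L‖_F ‖R‖_F`, so everything reduces to bounding `∑ p_{α,k}²` for one local state.
The centred effects `E_{α,k} - I/M` are Hilbert–Schmidt orthogonal across different `α`, and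
Cauchy–Schwarz against `ρ - I/d` gives `∑ p_{α,k}² ≤ N/M + (M²x - d)(d - 1)/(d M (M - 1))`,
which is the constant of the theorem once `(M - 1) N = d² - 1`.
-/

namespace Matrix

variable {m n κ : Type*} [Fintype m] [Fintype n] [Fintype κ]

lemma IsHermitian.ofReal_re_trace_mul {A B : Matrix n n ℂ} (hA : A.IsHermitian)
    (hB : B.IsHermitian) : ((A * B).trace.re : ℂ) = (A * B).trace :=
  Complex.conj_eq_iff_re.mp <| by
    rw [← Complex.star_def, ← trace_conjTranspose, conjTranspose_mul, hA.eq, hB.eq,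
      trace_mul_comm]

lemma re_trace_conjTranspose_mul_self (A : Matrix m n ℂ) :
    (Aᴴ * A).trace.re = ∑ i, ∑ j, ‖A i j‖ ^ 2 := by
  simp only [trace, diag, mul_apply, conjTranspose_apply, Complex.re_sum, Complex.star_def,
    Complex.conj_mul', ← Complex.ofReal_pow, Complex.ofReal_re]
  exact Finset.sum_comm

lemma re_trace_conjTranspose_mul_self_nonneg (A : Matrix m n ℂ) : 0 ≤ (Aᴴ * A).trace.re := by
  rw [re_trace_conjTranspose_mul_self]
  positivity

lemma re_trace_conjTranspose_mul_le (A B : Matrix m n ℂ) :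
    (Aᴴ * B).trace.re ≤ √(Aᴴ * A).trace.re * √(Bᴴ * B).trace.re := by
  rw [re_trace_conjTranspose_mul_self, re_trace_conjTranspose_mul_self,
    ← Fintype.sum_prod_type', ← Fintype.sum_prod_type']
  calc (Aᴴ * B).trace.re = ∑ p : m × n, (star (A p.1 p.2) * B p.1 p.2).re := by
        simp only [trace, diag, mul_apply, conjTranspose_apply, Complex.re_sum]
        rw [Finset.sum_comm]
        exact (Fintype.sum_prod_type' fun i j => (star (A i j) * B i j).re).symm
    _ ≤ ∑ p : m × n, ‖A p.1 p.2‖ * ‖B p.1 p.2‖ :=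
        Finset.sum_le_sum fun p _ =>
          (Complex.re_le_norm _).trans_eq (by rw [norm_mul, norm_star])
    _ ≤ _ := Real.sum_mul_le_sqrt_mul_sqrt _ _ _

section TraceNorm

variable [DecidableEq n]

lemma traceNorm_eq_sum_sqrt_eigenvalues (X : Matrix m n ℂ) :
    traceNorm X = ∑ i, √((isHermitian_conjTranspose_mul_self X).eigenvalues i) := by
  unfold traceNorm
  rw [trace_mul_cycle, Unitary.coe_star_mul_self, one_mul, trace_diagonal, Complex.re_sum]
  rfl

lemma conjTranspose_mul_self_mul_eigenvectorUnitary (X : Matrix m n ℂ) :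
    (X * (isHermitian_conjTranspose_mul_self X).eigenvectorUnitary.1)ᴴ *
        (X * (isHermitian_conjTranspose_mul_self X).eigenvectorUnitary.1) =
      diagonal fun i => ((isHermitian_conjTranspose_mul_self X).eigenvalues i : ℂ) := by
  set hX := isHermitian_conjTranspose_mul_self X
  set V : Matrix n n ℂ := hX.eigenvectorUnitary.1
  set ev := hX.eigenvalues
  have hVV : star V * V = 1 := Unitary.coe_star_mul_self _
  have hspec : Xᴴ * X = V * diagonal (fun i => (ev i : ℂ)) * star V := hX.spectral_theorem
  rw [conjTranspose_mul, Matrix.mul_assoc, ← Matrix.mul_assoc Xᴴ, hspec, ← star_eq_conjTranspose]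
  simp only [← Matrix.mul_assoc, hVV, Matrix.one_mul]
  rw [Matrix.mul_assoc, hVV, Matrix.mul_one]

/-- `U` is the partial isometry of the polar decomposition `X = U |X|`. -/
lemma exists_contraction_re_trace_eq_traceNorm (X : Matrix m n ℂ) :
    ∃ U : Matrix m n ℂ, (1 - Uᴴ * U).PosSemidef ∧ (Uᴴ * X).trace.re = traceNorm X := by
  set hX := isHermitian_conjTranspose_mul_self X
  set V : Matrix n n ℂ := hX.eigenvectorUnitary.1
  set s : n → ℝ := fun i => √(hX.eigenvalues i)
  have hZ : (X * V)ᴴ * (X * V) = diagonal fun i => ((s i * s i : ℝ) : ℂ) := by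
    rw [conjTranspose_mul_self_mul_eigenvectorUnitary]
    congr 1; funext i
    rw [Real.mul_self_sqrt (eigenvalues_conjTranspose_mul_self_nonneg X i)]
  set W := X * V * diagonal fun i => (((s i)⁻¹ : ℝ) : ℂ)
  have hWZ : Wᴴ * (X * V) = diagonal fun i => (s i : ℂ) := by
    have hWH : Wᴴ = diagonal (fun i => (((s i)⁻¹ : ℝ) : ℂ)) * (X * V)ᴴ := by
      rw [conjTranspose_mul (X * V), diagonal_conjTranspose]
      congr 2; funext i; simp
    rw [hWH, Matrix.mul_assoc, hZ, diagonal_mul_diagonal]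
    congr 1; funext i
    rw [← Complex.ofReal_mul, ← mul_assoc, inv_mul_mul_self]
  have hWW : Wᴴ * W = diagonal fun i => ((s i * (s i)⁻¹ : ℝ) : ℂ) := by
    rw [show W = X * V * diagonal fun i => (((s i)⁻¹ : ℝ) : ℂ) from rfl, ← Matrix.mul_assoc, hWZ,
      diagonal_mul_diagonal]
    simp only [Complex.ofReal_mul]
  refine ⟨W * star V, ?_, ?_⟩
  · have hUU : 1 - (W * star V)ᴴ * (W * star V) =
        V * diagonal (fun i => ((1 - s i * (s i)⁻¹ : ℝ) : ℂ)) * star V := by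
      rw [conjTranspose_mul, ← star_eq_conjTranspose, star_star, Matrix.mul_assoc,
        ← Matrix.mul_assoc Wᴴ, hWW]
      simp only [Complex.ofReal_sub, Complex.ofReal_one, ← diagonal_sub, diagonal_one,
        Matrix.mul_sub, Matrix.sub_mul, Matrix.mul_one, Matrix.mul_assoc]
      rw [show V * star V = 1 from Unitary.coe_mul_star_self _]
    rw [hUU]
    exact (PosSemidef.diagonal fun i => Complex.zero_le_real.mpr
      (sub_nonneg.mpr mul_inv_le_one)).mul_mul_conjTranspose_same V
  · rw [conjTranspose_mul, ← star_eq_conjTranspose, star_star, trace_mul_comm,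
      ← Matrix.mul_assoc, trace_mul_comm, hWZ, trace_diagonal, Complex.re_sum,
      traceNorm_eq_sum_sqrt_eigenvalues]
    simp only [Complex.ofReal_re, s]

lemma re_trace_mul_mul_conjTranspose_le {U : Matrix m n ℂ} (hU : (1 - Uᴴ * U).PosSemidef)
    (L : Matrix m κ ℂ) (R : Matrix n κ ℂ) :
    (Uᴴ * (L * Rᴴ)).trace.re ≤ √(Lᴴ * L).trace.re * √(Rᴴ * R).trace.re := by
  have hUR : ((U * R)ᴴ * (U * R)).trace.re ≤ (Rᴴ * R).trace.re := by
    have h := (Complex.nonneg_iff.mp (hU.conjTranspose_mul_mul_same R).trace_nonneg).1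
    rwa [Matrix.mul_sub, Matrix.sub_mul, Matrix.mul_one, trace_sub, Complex.sub_re, sub_nonneg,
      Matrix.mul_assoc, Matrix.mul_assoc, ← Matrix.mul_assoc Rᴴ, ← conjTranspose_mul] at h
  calc (Uᴴ * (L * Rᴴ)).trace.re = ((U * R)ᴴ * L).trace.re := by
        rw [← Matrix.mul_assoc, trace_mul_comm, conjTranspose_mul, Matrix.mul_assoc]
    _ ≤ √((U * R)ᴴ * (U * R)).trace.re * √(Lᴴ * L).trace.re := re_trace_conjTranspose_mul_le _ _
    _ ≤ √(Rᴴ * R).trace.re * √(Lᴴ * L).trace.re := by gcongr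
    _ = _ := mul_comm _ _

theorem traceNorm_mul_conjTranspose_le (L : Matrix m κ ℂ) (R : Matrix n κ ℂ) :
    traceNorm (L * Rᴴ) ≤ √(Lᴴ * L).trace.re * √(Rᴴ * R).trace.re := by
  obtain ⟨U, hU, hUX⟩ := exists_contraction_re_trace_eq_traceNorm (L * Rᴴ)
  exact hUX ▸ re_trace_mul_mul_conjTranspose_le hU L R

end TraceNorm

end Matrix

section OuterProducts

variable {ι κ K : Type*} [Fintype K]

noncomputable def sqrtWeightedCols (p : K → ℝ) (u : K → ι → ℝ) : Matrix ι K ℂ :=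
  of fun r j => ((√(p j) * u j r : ℝ) : ℂ)

lemma sqrtWeightedCols_mul_conjTranspose {p : K → ℝ} (hp0 : ∀ j, 0 ≤ p j) (v : K → ι → ℝ)
    (w : K → κ → ℝ) :
    sqrtWeightedCols p v * (sqrtWeightedCols p w)ᴴ =
      of fun r c => ((∑ j, p j * (v j r * w j c) : ℝ) : ℂ) := by
  ext r c
  simp only [sqrtWeightedCols, mul_apply, of_apply, conjTranspose_apply, Complex.star_def,
    Complex.conj_ofReal, ← Complex.ofReal_mul, ← Complex.ofReal_sum]
  congr 1
  refine Finset.sum_congr rfl fun j _ => ?_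
  linear_combination (v j r * w j c) * Real.mul_self_sqrt (hp0 j)

lemma re_trace_sqrtWeightedCols_le [Fintype ι] {p : K → ℝ} (hp0 : ∀ j, 0 ≤ p j)
    (hp1 : ∑ j, p j = 1) {u : K → ι → ℝ} {C : ℝ} (hu : ∀ j, ∑ r, u j r ^ 2 ≤ C) :
    ((sqrtWeightedCols p u)ᴴ * sqrtWeightedCols p u).trace.re ≤ C := by
  rw [re_trace_conjTranspose_mul_self]
  calc ∑ r, ∑ j, ‖sqrtWeightedCols p u r j‖ ^ 2 = ∑ j, p j * ∑ r, u j r ^ 2 := by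
        rw [Finset.sum_comm]
        simp only [sqrtWeightedCols, of_apply, Complex.norm_real, Real.norm_eq_abs, sq_abs,
          mul_pow, Real.sq_sqrt (hp0 _), Finset.mul_sum]
    _ ≤ ∑ j, p j * C := Finset.sum_le_sum fun j _ => mul_le_mul_of_nonneg_left (hu j) (hp0 j)
    _ = C := by rw [← Finset.sum_mul, hp1, one_mul]

theorem traceNorm_sum_outer_le [Fintype ι] [Fintype κ] [DecidableEq κ] {p : K → ℝ}
    (hp0 : ∀ j, 0 ≤ p j) (hp1 : ∑ j, p j = 1) {v : K → ι → ℝ} {w : K → κ → ℝ} {C D : ℝ}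
    (hv : ∀ j, ∑ r, v j r ^ 2 ≤ C) (hw : ∀ j, ∑ c, w j c ^ 2 ≤ D) :
    traceNorm (of fun r c => ((∑ j, p j * (v j r * w j c) : ℝ) : ℂ)) ≤ √(C * D) := by
  have hC := re_trace_sqrtWeightedCols_le hp0 hp1 hv
  rw [← sqrtWeightedCols_mul_conjTranspose hp0,
    Real.sqrt_mul ((re_trace_conjTranspose_mul_self_nonneg _).trans hC)]
  exact (traceNorm_mul_conjTranspose_le _ _).trans <|
    mul_le_mul (Real.sqrt_le_sqrt hC) (Real.sqrt_le_sqrt (re_trace_sqrtWeightedCols_le hp0 hp1 hw))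
      (Real.sqrt_nonneg _) (Real.sqrt_nonneg _)

end OuterProducts

lemma sum_sq_prod_le_prod {ι : Type*} [Fintype ι] [DecidableEq ι] {κ : ι → Type*}
    [∀ i, Fintype (κ i)] (f : ∀ i, κ i → ℝ) {C : ι → ℝ} (hf : ∀ i, ∑ k, f i k ^ 2 ≤ C i) :
    ∑ γ : (∀ i, κ i), (∏ i, f i (γ i)) ^ 2 ≤ ∏ i, C i := by
  simp only [← Finset.prod_pow]
  rw [← Fintype.prod_sum fun i k => f i k ^ 2]
  exact Finset.prod_le_prod (fun i _ => by positivity) fun i _ => hf i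

namespace IsDensityMatrix

variable {ι : Type*} [Fintype ι] [DecidableEq ι] {ρ : Matrix ι ι ℂ}

lemma re_trace_mul_self_le_one (hρ : IsDensityMatrix ρ) : (ρ * ρ).trace.re ≤ 1 := by
  obtain ⟨hpsd, htr⟩ := hρ
  set ev := hpsd.1.eigenvalues
  have hsum : ∑ i, ev i = 1 := by
    have := congrArg Complex.re (hpsd.1.trace_eq_sum_eigenvalues.symm.trans htr)
    simpa [Complex.re_sum] using this
  have hsq : (ρ * ρ).trace.re = ∑ i, ev i ^ 2 := by
    conv_lhs => rw [hpsd.1.spectral_theorem, ← map_mul, Unitary.conjStarAlgAut_apply,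
      trace_mul_cycle, Unitary.coe_star_mul_self, one_mul, diagonal_mul_diagonal, trace_diagonal]
    simp [Complex.re_sum, sq, ev]
  calc (ρ * ρ).trace.re = ∑ i, ev i ^ 2 := hsq
    _ ≤ (∑ i, ev i) ^ 2 := Finset.sum_sq_le_sq_sum_of_nonneg fun i _ => hpsd.eigenvalues_nonneg i
    _ = 1 := by rw [hsum, one_pow]

lemma re_trace_sub_smul_one_sq_le (hρ : IsDensityMatrix ρ) :
    ((ρ - (Fintype.card ι : ℂ)⁻¹ • 1) * (ρ - (Fintype.card ι : ℂ)⁻¹ • 1)).trace.re ≤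
      ((Fintype.card ι : ℝ) - 1) / Fintype.card ι := by
  have hcard : (Fintype.card ι : ℂ) ≠ 0 := by
    have : Nonempty ι := by
      by_contra h
      simpa [not_nonempty_iff.mp h, trace] using hρ.2
    exact_mod_cast Fintype.card_ne_zero
  have hexp : ((ρ - (Fintype.card ι : ℂ)⁻¹ • 1) * (ρ - (Fintype.card ι : ℂ)⁻¹ • 1)).trace =
      (ρ * ρ).trace - ((Fintype.card ι : ℝ)⁻¹ : ℝ) := by
    simp only [sub_mul, mul_sub, Matrix.smul_mul, Matrix.mul_smul, trace_sub, trace_smul,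
      Matrix.one_mul, Matrix.mul_one, smul_smul, trace_one, hρ.2, smul_eq_mul]
    push_cast
    field_simp
    ring
  rw [hexp, Complex.sub_re, Complex.ofReal_re, sub_div, div_self (mod_cast hcard), one_div]
  linarith [hρ.re_trace_mul_self_le_one]

end IsDensityMatrix

lemma le_mul_of_le_sqrt_mul_mul_sqrt {t u c : ℝ} (hu : 0 ≤ u) (hc : 0 ≤ c)
    (h : t ≤ √(u * t) * √c) : t ≤ u * c := by
  rcases le_or_gt t 0 with ht | ht
  · exact ht.trans (mul_nonneg hu hc)
  · rw [← Real.sqrt_mul (mul_nonneg hu ht.le), Real.le_sqrt ht.le (by positivity)] at h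
    nlinarith

def povmProb {d N M : ℕ} (E : Fin N → Fin M → Matrix (Fin d) (Fin d) ℂ)
    (σ : Matrix (Fin d) (Fin d) ℂ) (α : Fin N) (k : Fin M) : ℝ :=
  (E α k * σ).trace.re

lemma ofReal_povmProb {d N M : ℕ} {E : Fin N → Fin M → Matrix (Fin d) (Fin d) ℂ}
    {σ : Matrix (Fin d) (Fin d) ℂ} {α : Fin N} {k : Fin M} (hE : (E α k).IsHermitian)
    (hσ : σ.IsHermitian) : (povmProb E σ α k : ℂ) = (E α k * σ).trace :=
  hE.ofReal_re_trace_mul hσ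

namespace IsNMPOVM

variable {d N M : ℕ} {x : ℝ} {E : Fin N → Fin M → Matrix (Fin d) (Fin d) ℂ}

lemma two_le_card (hE : IsNMPOVM d N M x E) : (2 : ℝ) ≤ M := by
  obtain ⟨-, -, -, -, -, -, hlo, hhi⟩ := hE
  have h : (d : ℝ) / M ^ 2 < d / M := hlo.trans_le (hhi.trans (min_le_right _ _))
  have : 2 ≤ M := by
    by_contra hM
    interval_cases M <;> simp at h
  exact_mod_cast this

lemma one_le_dim (hE : IsNMPOVM d N M x E) : (1 : ℝ) ≤ d := by
  obtain ⟨-, -, -, -, -, -, hlo, hhi⟩ := hE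
  have h : (d : ℝ) / M ^ 2 < d ^ 2 / M ^ 2 := hlo.trans_le (hhi.trans (min_le_left _ _))
  have : 1 ≤ d := by
    by_contra hd
    interval_cases d
    simp at h
  exact_mod_cast this

lemma dim_lt_sq_card_mul (hE : IsNMPOVM d N M x E) : (d : ℝ) < M ^ 2 * x := by
  have hlo := hE.2.2.2.2.2.2.1
  rwa [div_lt_iff₀' (by nlinarith [hE.two_le_card])] at hlo

lemma sum_povmProb (hE : IsNMPOVM d N M x E) {ρ : Matrix (Fin d) (Fin d) ℂ}
    (hρ : IsDensityMatrix ρ) (α : Fin N) : ∑ k, povmProb E ρ α k = 1 := by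
  rw [← Complex.ofReal_inj, Complex.ofReal_sum]
  simp only [ofReal_povmProb (hE.1 α _).1 hρ.1.1, ← trace_sum, ← Finset.sum_mul, hE.2.1 α,
    Matrix.one_mul, hρ.2, Complex.ofReal_one]

lemma trace_centered_mul_centered (hE : IsNMPOVM d N M x E) (α β : Fin N) (k l : Fin M) :
    ((E α k - (M : ℂ)⁻¹ • 1) * (E β l - (M : ℂ)⁻¹ • 1)).trace =
      ((if α = β then ((M : ℝ) ^ 2 * x - d) / (M * ((M : ℝ) - 1)) *
        ((if k = l then 1 else 0) - 1 / M) else 0 : ℝ) : ℂ) := by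
  have hM := hE.two_le_card
  obtain ⟨-, -, htr, hsq, hsame, hdiff, -⟩ := hE
  have hM0 : (M : ℂ) ≠ 0 := by exact_mod_cast (show (M : ℝ) ≠ 0 by linarith)
  have hM1 : (M : ℂ) - 1 ≠ 0 := by
    rw [sub_ne_zero]; exact_mod_cast (show (M : ℝ) ≠ 1 by linarith)
  simp only [sub_mul, mul_sub, Matrix.smul_mul, Matrix.mul_smul, trace_sub, trace_smul,
    Matrix.one_mul, Matrix.mul_one, smul_smul, trace_one, Fintype.card_fin, htr, smul_eq_mul]
  by_cases hαβ : α = β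
  · subst hαβ
    by_cases hkl : k = l
    · subst hkl
      rw [hsq, if_pos rfl, if_pos rfl]
      push_cast; field_simp; ring
    · rw [hsame α k l hkl, if_pos rfl, if_neg hkl]
      push_cast; field_simp; ring
  · rw [hdiff α β k l hαβ, if_neg hαβ]
    push_cast; field_simp; ring

lemma trace_centered_mul_sub_smul_one (hE : IsNMPOVM d N M x E) {ρ : Matrix (Fin d) (Fin d) ℂ}
    (hρ : IsDensityMatrix ρ) (α : Fin N) (k : Fin M) :
    ((E α k - (M : ℂ)⁻¹ • 1) * (ρ - (d : ℂ)⁻¹ • 1)).trace =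
      ((povmProb E ρ α k - 1 / M : ℝ) : ℂ) := by
  have hd0 : (d : ℂ) ≠ 0 := by exact_mod_cast (show (d : ℝ) ≠ 0 by linarith [hE.one_le_dim])
  have hM0 : (M : ℂ) ≠ 0 := by exact_mod_cast (show (M : ℝ) ≠ 0 by linarith [hE.two_le_card])
  simp only [sub_mul, mul_sub, Matrix.smul_mul, Matrix.mul_smul, trace_sub, trace_smul,
    Matrix.one_mul, Matrix.mul_one, smul_smul, trace_one, Fintype.card_fin, hE.2.2.1,
    ← ofReal_povmProb (hE.1 α k).1 hρ.1.1, hρ.2, smul_eq_mul]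
  push_cast
  field_simp
  ring

lemma trace_sum_smul_centered_mul_self (hE : IsNMPOVM d N M x E) (t : Fin N → Fin M → ℝ) :
    ((∑ α, ∑ k, (t α k : ℂ) • (E α k - (M : ℂ)⁻¹ • 1)) *
        (∑ α, ∑ k, (t α k : ℂ) • (E α k - (M : ℂ)⁻¹ • 1))).trace =
      ((((M : ℝ) ^ 2 * x - d) / (M * ((M : ℝ) - 1)) *
        ∑ α, (∑ k, t α k ^ 2 - (∑ k, t α k) ^ 2 / M) : ℝ) : ℂ) := by
  simp only [Finset.sum_mul, Finset.mul_sum, trace_sum, smul_mul_smul, trace_smul,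
    hE.trace_centered_mul_centered, smul_eq_mul, ← Complex.ofReal_mul, ← Complex.ofReal_sum]
  congr 1
  simp only [mul_ite, mul_zero]
  refine Finset.sum_congr rfl fun β _ => ?_
  simp only [Finset.sum_comm (s := Finset.univ (α := Fin N)), Finset.sum_ite_eq',
    Finset.mem_univ, if_true]
  set u := ((M : ℝ) ^ 2 * x - d) / (M * ((M : ℝ) - 1))
  calc ∑ l, ∑ k, t β k * t β l * (u * ((if k = l then 1 else 0) - 1 / M))
      = ∑ l, ∑ k, (u * (if k = l then t β k * t β l else 0) - u / M * (t β k * t β l)) := by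
        congr! 2 with l _ k _
        split_ifs <;> ring
    _ = u * (∑ k, t β k ^ 2 - (∑ k, t β k) ^ 2 / M) := by
        simp only [Finset.sum_sub_distrib, ← Finset.mul_sum, Finset.sum_ite_eq', Finset.mem_univ,
          if_true]
        rw [sq (∑ k, t β k), Finset.sum_mul_sum, Finset.sum_comm]
        simp only [sq]
        ring

lemma sum_sq_povmProb_le (hE : IsNMPOVM d N M x E) {ρ : Matrix (Fin d) (Fin d) ℂ}
    (hρ : IsDensityMatrix ρ) :
    ∑ α, ∑ k, povmProb E ρ α k ^ 2 ≤
      N / M + ((M : ℝ) ^ 2 * x - d) / (M * ((M : ℝ) - 1)) * (((d : ℝ) - 1) / d) := by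
  set u := ((M : ℝ) ^ 2 * x - d) / (M * ((M : ℝ) - 1))
  set t := povmProb E ρ
  set T := ∑ α, ∑ k, t α k ^ 2 - N / M
  set X := ∑ α, ∑ k, (t α k : ℂ) • (E α k - (M : ℂ)⁻¹ • 1)
  set Y := ρ - (d : ℂ)⁻¹ • 1
  have hrow : ∀ α, ∑ k, t α k = 1 := hE.sum_povmProb hρ
  have hFY : ∀ α k, ((E α k - (M : ℂ)⁻¹ • 1) * Y).trace = ((t α k - 1 / M : ℝ) : ℂ) :=
    hE.trace_centered_mul_sub_smul_one hρ
  have hXH : X.IsHermitian := by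
    simp only [X, IsHermitian, conjTranspose_sum, conjTranspose_smul, conjTranspose_sub,
      (hE.1 _ _).1.eq, conjTranspose_one, Complex.star_def, Complex.conj_ofReal, star_inv₀,
      star_natCast]
  have hYH : Y.IsHermitian := by
    simp only [Y, IsHermitian, conjTranspose_sub, conjTranspose_smul, hρ.1.1.eq,
      conjTranspose_one, star_inv₀, star_natCast]
  have hXX : (X * X).trace.re = u * T := by
    rw [hE.trace_sum_smul_centered_mul_self, Complex.ofReal_re]
    simp only [hrow, one_pow, T, Finset.sum_sub_distrib, Finset.sum_const,
      Finset.card_univ, Fintype.card_fin, nsmul_eq_mul]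
    ring
  have hXY : (X * Y).trace.re = T := by
    simp only [X, Finset.sum_mul, trace_sum, Matrix.smul_mul, trace_smul, hFY, smul_eq_mul,
      ← Complex.ofReal_mul, ← Complex.ofReal_sum, Complex.ofReal_re, mul_sub, T,
      Finset.sum_sub_distrib, mul_one_div]
    simp only [← Finset.sum_div, hrow, sq, Finset.sum_const, Finset.card_univ,
      Fintype.card_fin, nsmul_eq_mul, mul_one]
  have hYY : (Y * Y).trace.re ≤ ((d : ℝ) - 1) / d := by
    simpa using hρ.re_trace_sub_smul_one_sq_le
  -- Cauchy–Schwarz for the Hilbert–Schmidt inner product, with `tr(X²) = u tr(XY)`.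
  have hCS : T ≤ √(u * T) * √(((d : ℝ) - 1) / d) := by
    have := re_trace_conjTranspose_mul_le X Y
    rw [hXH.eq, hYH.eq, hXX, hXY] at this
    exact this.trans (by gcongr)
  have hu : 0 ≤ u := div_nonneg (by linarith [hE.dim_lt_sq_card_mul])
    (by nlinarith [hE.two_le_card])
  have hc : 0 ≤ ((d : ℝ) - 1) / d := div_nonneg (by linarith [hE.one_le_dim]) (by positivity)
  linarith [le_mul_of_le_sqrt_mul_mul_sqrt hu hc hCS]

lemma sum_sq_povmProb_le_of_isInfoComplete (hE : IsNMPOVM d N M x E)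
    (hIC : IsInfoComplete d N M) {ρ : Matrix (Fin d) (Fin d) ℂ} (hρ : IsDensityMatrix ρ) :
    ∑ α, ∑ k, povmProb E ρ α k ^ 2 ≤
      ((d : ℝ) - 1) * ((d : ℝ) ^ 2 + (M : ℝ) ^ 2 * x) / ((d : ℝ) * M * ((M : ℝ) - 1)) := by
  refine (hE.sum_sq_povmProb_le hρ).trans_eq ?_
  have hd := hE.one_le_dim
  have hM := hE.two_le_card
  have hM1 : (M : ℝ) - 1 ≠ 0 := by linarith
  have hN : ((M : ℝ) - 1) * N = (d : ℝ) ^ 2 - 1 := hIC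
  field_simp
  linear_combination (d : ℝ) * hN

end IsNMPOVM

lemma trace_famKron_mul_famKron {nn : ℕ} {d : Fin nn → ℕ}
    (A B : ∀ i, Matrix (Fin (d i)) (Fin (d i)) ℂ) :
    (famKron A * famKron B).trace = ∏ i, (A i * B i).trace := by
  simp only [trace, diag, mul_apply, famKron, of_apply, ← Finset.prod_mul_distrib,
    Fintype.prod_sum]

lemma prod_famWith {nn : ℕ} {F : Fin nn → Type*} {β : Type*} [CommMonoid β] (q : Fin nn)
    (xq : F q) (y : ∀ i, i ≠ q → F i) (g : ∀ i, F i → β) :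
    ∏ i, g i (famWith F q xq y i) = g q xq * ∏ i : {i // i ≠ q}, g i (y i i.2) := by
  rw [Fintype.prod_eq_mul_prod_subtype_ne _ q, famWith, dif_pos rfl]
  exact congrArg _ (Finset.prod_congr rfl fun i _ => by rw [famWith, dif_neg i.2])

lemma trace_famKron_famWith_mul_sum {nn K : ℕ} {d : Fin nn → ℕ} (q : Fin nn)
    (X : Matrix (Fin (d q)) (Fin (d q)) ℂ) (Y : ∀ i, i ≠ q → Matrix (Fin (d i)) (Fin (d i)) ℂ)
    (p : Fin K → ℝ) (ρs : Fin K → ∀ i, Matrix (Fin (d i)) (Fin (d i)) ℂ) :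
    (famKron (famWith (fun i => Matrix (Fin (d i)) (Fin (d i)) ℂ) q X Y) *
        ∑ j, (p j : ℂ) • famKron (ρs j)).trace =
      ∑ j, (p j : ℂ) * ((X * ρs j q).trace * ∏ i : {i // i ≠ q}, (Y i i.2 * ρs j i).trace) := by
  simp only [Matrix.mul_sum, trace_sum, Matrix.mul_smul, trace_smul, smul_eq_mul,
    trace_famKron_mul_famKron]
  exact Finset.sum_congr rfl fun j _ => by rw [prod_famWith q X Y fun i A => (A * ρs j i).trace]

/-- The matrix `Q_{a,b}(ρ)` of the theorem. -/
def correlationMatrix {nn m n : ℕ} {d N M : Fin nn → ℕ} (q : Fin nn)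
    (E : ∀ i, Fin (N i) → Fin (M i) → Matrix (Fin (d i)) (Fin (d i)) ℂ)
    (a : Fin m → ℝ) (b : Fin n → ℝ) (ρ : Matrix (∀ i, Fin (d i)) (∀ i, Fin (d i)) ℂ) :
    Matrix (Fin m ⊕ Fin (N q) × Fin (M q))
      (Fin n ⊕ ((i : {j : Fin nn // j ≠ q}) → Fin (N i.1) × Fin (M i.1))) ℂ :=
  fromBlocks
    (of fun i j => (a i : ℂ) * (b j : ℂ))
    (of fun i γ => (a i : ℂ) *
      (famKron (famWith (fun i' => Matrix (Fin (d i')) (Fin (d i')) ℂ) q 1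
        (fun i' h => E i' (γ ⟨i', h⟩).1 (γ ⟨i', h⟩).2)) * ρ).trace)
    (of fun pr j =>
      (famKron (famWith (fun i' => Matrix (Fin (d i')) (Fin (d i')) ℂ) q (E q pr.1 pr.2)
        (fun _ _ => 1)) * ρ).trace * (b j : ℂ))
    (of fun pr γ =>
      (famKron (famWith (fun i' => Matrix (Fin (d i')) (Fin (d i')) ℂ) q (E q pr.1 pr.2)
        (fun i' h => E i' (γ ⟨i', h⟩).1 (γ ⟨i', h⟩).2)) * ρ).trace)

lemma correlationMatrix_eq_sum_outer {nn m n K : ℕ} {d N M : Fin nn → ℕ} (q : Fin nn)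
    {E : ∀ i, Fin (N i) → Fin (M i) → Matrix (Fin (d i)) (Fin (d i)) ℂ}
    (hE : ∀ i α k, (E i α k).IsHermitian) (a : Fin m → ℝ) (b : Fin n → ℝ)
    {p : Fin K → ℝ} (hp1 : ∑ j, p j = 1) {ρs : Fin K → ∀ i, Matrix (Fin (d i)) (Fin (d i)) ℂ}
    (hρs : ∀ j i, IsDensityMatrix (ρs j i)) :
    correlationMatrix q E a b (∑ j, (p j : ℂ) • famKron (ρs j)) =
      of fun r c => ((∑ j, p j *
        (Sum.elim a (fun pr => povmProb (E q) (ρs j q) pr.1 pr.2) r *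
          Sum.elim b (fun γ => ∏ i, povmProb (E i.1) (ρs j i.1) (γ i).1 (γ i).2) c) : ℝ) : ℂ) := by
  have hprob : ∀ i α k j, (E i α k * ρs j i).trace = povmProb (E i) (ρs j i) α k :=
    fun i α k j => (ofReal_povmProb (hE i α k) (hρs j i).1.1).symm
  have htr : ∀ j i, (ρs j i).trace = 1 := fun j i => (hρs j i).2
  ext (i | pr) (j | γ) <;>
    simp only [correlationMatrix, fromBlocks_apply₁₁, fromBlocks_apply₁₂, fromBlocks_apply₂₁,
      fromBlocks_apply₂₂, of_apply, Sum.elim_inl, Sum.elim_inr, trace_famKron_famWith_mul_sum,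
      hprob, htr, Finset.prod_const_one, mul_one, one_mul, Complex.ofReal_sum,
      Complex.ofReal_mul, Complex.ofReal_prod]
  · rw [← Finset.sum_mul, ← Complex.ofReal_sum, hp1, Complex.ofReal_one, one_mul]
  · rw [Finset.mul_sum]; exact Finset.sum_congr rfl fun _ _ => by ring
  · rw [Finset.sum_mul]; exact Finset.sum_congr rfl fun _ _ => by ring

theorem multipartite_separability_criterion_general
    (nn m n : ℕ) (d N M : Fin nn → ℕ) (x : Fin nn → ℝ) (q : Fin nn)
    (E : ∀ i, Fin (N i) → Fin (M i) → Matrix (Fin (d i)) (Fin (d i)) ℂ)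
    (hE : ∀ i, IsNMPOVM (d i) (N i) (M i) (x i) (E i))
    (hIC : ∀ i, IsInfoComplete (d i) (N i) (M i))
    (a : Fin m → ℝ) (b : Fin n → ℝ)
    (ρ : Matrix (∀ i, Fin (d i)) (∀ i, Fin (d i)) ℂ)
    (hsep : FullySeparable ρ) :
    traceNorm (Matrix.fromBlocks
      (Matrix.of fun (i : Fin m) (j : Fin n) => ((a i : ℂ) * (b j : ℂ)))
      (Matrix.of fun (i : Fin m)
          (γ : (i' : {j : Fin nn // j ≠ q}) → Fin (N i'.1) × Fin (M i'.1)) =>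
        (a i : ℂ) *
          (famKron (famWith (fun i' => Matrix (Fin (d i')) (Fin (d i')) ℂ) q
              (1 : Matrix (Fin (d q)) (Fin (d q)) ℂ)
              (fun i' h => E i' (γ ⟨i', h⟩).1 (γ ⟨i', h⟩).2)) * ρ).trace)
      (Matrix.of fun (p : Fin (N q) × Fin (M q)) (j : Fin n) =>
        (famKron (famWith (fun i' => Matrix (Fin (d i')) (Fin (d i')) ℂ) q
            (E q p.1 p.2)
            (fun i' _ => (1 : Matrix (Fin (d i')) (Fin (d i')) ℂ))) * ρ).trace *
          (b j : ℂ))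
      (Matrix.of fun (p : Fin (N q) × Fin (M q))
          (γ : (i' : {j : Fin nn // j ≠ q}) → Fin (N i'.1) × Fin (M i'.1)) =>
        (famKron (famWith (fun i' => Matrix (Fin (d i')) (Fin (d i')) ℂ) q
            (E q p.1 p.2)
            (fun i' h => E i' (γ ⟨i', h⟩).1 (γ ⟨i', h⟩).2)) * ρ).trace)) ≤
    Real.sqrt (
      (∑ i, a i ^ 2 +
        ((d q : ℝ) - 1) * ((d q : ℝ) ^ 2 + (M q : ℝ) ^ 2 * x q) /
          ((d q : ℝ) * (M q : ℝ) * ((M q : ℝ) - 1))) *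
      (∑ j, b j ^ 2 +
        ∏ i ∈ Finset.univ.erase q, ((d i : ℝ) - 1) / (d i) *
          (((d i : ℝ) ^ 2 + (M i : ℝ) ^ 2 * x i) /
            ((M i : ℝ) * ((M i : ℝ) - 1))))) := by
  obtain ⟨K, p, ρs, hp0, hp1, hρs, rfl⟩ := hsep
  have hlocal := fun i j => (hE i).sum_sq_povmProb_le_of_isInfoComplete (hIC i) (hρs j i)
  change traceNorm (correlationMatrix q E a b _) ≤ _
  rw [correlationMatrix_eq_sum_outer q (fun i α k => ((hE i).1 α k).1) a b hp1 hρs,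
    Finset.prod_subtype (Finset.univ.erase q) (p := (· ≠ q)) (F := inferInstance) (by simp)]
  refine traceNorm_sum_outer_le hp0 hp1 (fun j => ?_) (fun j => ?_)
  · rw [Fintype.sum_sum_type, Fintype.sum_prod_type]
    simp only [Sum.elim_inl, Sum.elim_inr]
    exact add_le_add le_rfl (hlocal q j)
  · rw [Fintype.sum_sum_type]
    simp only [Sum.elim_inl, Sum.elim_inr]
    have hprod := sum_sq_prod_le_prod
      (fun (i : {i // i ≠ q}) (pr : Fin (N i) × Fin (M i)) => povmProb (E i) (ρs j i) pr.1 pr.2)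
      (C := fun i => ((d i.1 : ℝ) - 1) / d i.1 * (((d i.1 : ℝ) ^ 2 + (M i.1 : ℝ) ^ 2 * x i.1) /
        ((M i.1 : ℝ) * ((M i.1 : ℝ) - 1)))) fun i => by
      rw [Fintype.sum_prod_type, div_mul_div_comm, ← mul_assoc]
      exact hlocal i.1 j
    exact add_le_add le_rfl hprod

/-- Theorem 2 of the paper: for a fully separable n-partite
state ρ, a fixed subsystem A_q, arbitrary real vectors a, b, and
informationally complete (N_{A_i},M_{A_i})-POVMs on each subsystem,
‖Q_{a,b}(ρ_{A_1⋯Â_q⋯A_n})‖_tr ≤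
√((|a|² + (d_{A_q}−1)(d_{A_q}²+M_{A_q}²x_{A_q})/(d_{A_q}M_{A_q}(M_{A_q}−1))) ·
  (|b|² + ∏_{i≠q} ((d_{A_i}−1)/d_{A_i})·(d_{A_i}²+M_{A_i}²x_{A_i})/(M_{A_i}(M_{A_i}−1)))). -/
theorem multipartite_separability_criterion
    (nn m n : ℕ) (d N M : Fin nn → ℕ) (x : Fin nn → ℝ) (q : Fin nn)
    (E : ∀ i, Fin (N i) → Fin (M i) → Matrix (Fin (d i)) (Fin (d i)) ℂ)
    (hE : ∀ i, IsNMPOVM (d i) (N i) (M i) (x i) (E i))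
    (hIC : ∀ i, IsInfoComplete (d i) (N i) (M i))
    (a : Fin m → ℝ) (b : Fin n → ℝ)
    (ρ : Matrix (∀ i, Fin (d i)) (∀ i, Fin (d i)) ℂ)
    (hρ : IsDensityMatrix ρ) (hsep : FullySeparable ρ) :
    traceNorm (Matrix.fromBlocks
      (Matrix.of fun (i : Fin m) (j : Fin n) => ((a i : ℂ) * (b j : ℂ)))
      (Matrix.of fun (i : Fin m)
          (γ : (i' : {j : Fin nn // j ≠ q}) → Fin (N i'.1) × Fin (M i'.1)) =>
        (a i : ℂ) *
          (famKron (famWith (fun i' => Matrix (Fin (d i')) (Fin (d i')) ℂ) q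
              (1 : Matrix (Fin (d q)) (Fin (d q)) ℂ)
              (fun i' h => E i' (γ ⟨i', h⟩).1 (γ ⟨i', h⟩).2)) * ρ).trace)
      (Matrix.of fun (p : Fin (N q) × Fin (M q)) (j : Fin n) =>
        (famKron (famWith (fun i' => Matrix (Fin (d i')) (Fin (d i')) ℂ) q
            (E q p.1 p.2)
            (fun i' _ => (1 : Matrix (Fin (d i')) (Fin (d i')) ℂ))) * ρ).trace *
          (b j : ℂ))
      (Matrix.of fun (p : Fin (N q) × Fin (M q))
          (γ : (i' : {j : Fin nn // j ≠ q}) → Fin (N i'.1) × Fin (M i'.1)) =>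
        (famKron (famWith (fun i' => Matrix (Fin (d i')) (Fin (d i')) ℂ) q
            (E q p.1 p.2)
            (fun i' h => E i' (γ ⟨i', h⟩).1 (γ ⟨i', h⟩).2)) * ρ).trace)) ≤
    Real.sqrt (
      (∑ i, a i ^ 2 +
        ((d q : ℝ) - 1) * ((d q : ℝ) ^ 2 + (M q : ℝ) ^ 2 * x q) /
          ((d q : ℝ) * (M q : ℝ) * ((M q : ℝ) - 1))) *
      (∑ j, b j ^ 2 +
        ∏ i ∈ Finset.univ.erase q, ((d i : ℝ) - 1) / (d i) *
          (((d i : ℝ) ^ 2 + (M i : ℝ) ^ 2 * x i) /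
            ((M i : ℝ) * ((M i : ℝ) - 1))))) :=
  multipartite_separability_criterion_general nn m n d N M x q E hE hIC a b ρ hsep
end

section
/- Let {G_{α,k} : α=1,…,N, k=1,…,M−1} be traceless Hermitian d×d matrices that are orthonormal with respect to the Hilbert–Schmidt inner product (tr(G_{α,k}G_{β,l}) = δ_{αβ}δ_{kl}), set G_α = Σ_{k=1}^{M−1} G_{α,k}, define H_{α,k} = G_α − √M(√M+1)G_{α,k} for k = 1,…,M−1 and H_{α,M} = (√M+1)G_α, and for a real parameter t set E_{α,k} = (1/M)I_d + t H_{α,k}. Then for every α: Σ_{k=1}^{M} E_{α,k} = I_d; tr(E_{α,k}) = d/M for all k; tr(E_{α,k}²) = d/M² + t²(M−1)(√M+1)² for all k; tr(E_{α,k}E_{α,l}) = d/M² − t²(√M+1)² for all k ≠ l; and tr(E_{α,k}E_{β,l}) = d/M² for all α ≠ β and all k, l. -/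
/-!
Writing `H_{α,k} = ∑_m c_k(m) G_{α,m}` with real coefficient vectors `c_1, …, c_M ∈ ℝ^{M-1}`,
orthonormality of the `G_{α,m}` turns `tr(H_{α,k} H_{β,l})` into `δ_{αβ} ⟨c_k, c_l⟩`, and
tracelessness makes the identity part of `E_{α,k} = I/M + t H_{α,k}` decouple. The `c_k` are the
vertices of a regular simplex centred at the origin: `∑_k c_k = 0`,
`‖c_k‖² = (M-1)(√M+1)²` and `⟨c_k, c_l⟩ = -(√M+1)²` for `k ≠ l`, both because `(√M)² = M`.
-/

open Matrix Finset

section Trace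

variable {n ι κ R S : Type*} [Fintype n] [Fintype ι] [DecidableEq ι] [DecidableEq κ]
  [CommRing R] [CommRing S] [Algebra S R]

theorem trace_sum_smul_mul_sum_smul (G : κ → ι → Matrix n n R)
    (hG : ∀ α k β l, (G α k * G β l).trace = if α = β ∧ k = l then 1 else 0)
    (a b : ι → S) (α β : κ) :
    ((∑ k, a k • G α k) * ∑ l, b l • G β l).trace =
      if α = β then algebraMap S R (∑ k, a k * b k) else 0 := by
  simp_rw [sum_mul, mul_sum, trace_sum, smul_mul_smul_comm, trace_smul, hG]
  split_ifs with h
  · subst h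
    simp [Algebra.smul_def, map_sum]
  · simp [h]

theorem trace_smul_one_add_smul_mul_smul_one_add_smul [DecidableEq n] (c t : S)
    {A B : Matrix n n R} (hA : A.trace = 0) (hB : B.trace = 0) :
    ((c • 1 + t • A) * (c • 1 + t • B)).trace =
      algebraMap S R (c ^ 2 * Fintype.card n) + algebraMap S R (t ^ 2) * (A * B).trace := by
  simp only [add_mul, mul_add, smul_mul_smul_comm, one_mul, mul_one, trace_add, trace_smul,
    trace_one, hA, hB, smul_zero, add_zero, zero_add]
  simp [Algebra.smul_def, pow_two]

end Trace

/-- The coefficient `c_k(m)` of `G_{α,m}` in `H_{α,k}`; indices are natural numbers so that sums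
over `Fin` can be moved to `Finset.range`. -/
noncomputable def simplexCoeff (M k m : ℕ) : ℝ :=
  if k < M - 1 then 1 - √M * (√M + 1) * (if k = m then 1 else 0) else √M + 1

theorem sum_simplexCoeff {M m : ℕ} (hm : m < M - 1) :
    ∑ k ∈ range M, simplexCoeff M k m = 0 := by
  have hs : √M ^ 2 = M := Real.sq_sqrt (Nat.cast_nonneg _)
  have hcard : ((M - 1 : ℕ) : ℝ) = M - 1 := by push_cast [Nat.cast_sub (by omega : 1 ≤ M)]; ring
  rw [← Nat.sub_add_cancel (by omega : 1 ≤ M), sum_range_succ,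
    Nat.sub_add_cancel (by omega : 1 ≤ M),
    sum_congr rfl fun k hk => by rw [simplexCoeff, if_pos (mem_range.1 hk)]]
  simp [simplexCoeff, sum_sub_distrib, hm, hcard]
  linear_combination -hs

theorem sum_simplexCoeff_mul_simplexCoeff {M k l : ℕ} (hk : k < M) (hl : l < M) :
    ∑ m ∈ range (M - 1), simplexCoeff M k m * simplexCoeff M l m =
      if k = l then ((M : ℝ) - 1) * (√M + 1) ^ 2 else -(√M + 1) ^ 2 := by
  have hs : √M ^ 2 = M := Real.sq_sqrt (Nat.cast_nonneg _)
  have hcard : ((M - 1 : ℕ) : ℝ) = M - 1 := by push_cast [Nat.cast_sub (by omega : 1 ≤ M)]; ring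
  by_cases hk' : k < M - 1 <;> by_cases hl' : l < M - 1
  · by_cases hkl : k = l
    · subst hkl
      simp [simplexCoeff, hk', mul_sub, sub_mul, sum_sub_distrib, hcard]
      linear_combination (√M ^ 2 + 2 * √M) * hs
    · simp [simplexCoeff, hk', hl', hkl, mul_sub, sub_mul, sum_sub_distrib, hcard]
      linear_combination -hs
  · have hkl : k ≠ l := by omega
    simp [simplexCoeff, hk', hl', hkl, sub_mul, sum_sub_distrib, hcard]
    linear_combination -(√M + 1) * hs
  · have hkl : k ≠ l := by omega
    simp [simplexCoeff, hk', hl', hkl, mul_sub, sum_sub_distrib, hcard]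
    linear_combination -(√M + 1) * hs
  · have hkl : k = l := by omega
    subst hkl
    simp only [simplexCoeff, if_neg hk', sum_const, card_range, nsmul_eq_mul, hcard, if_true]
    ring

section Module

variable {V : Type*} [AddCommGroup V] [Module ℝ V] {M : ℕ}

theorem sum_simplexCoeff_smul (v : Fin (M - 1) → V) (k : Fin M) :
    ∑ m : Fin (M - 1), simplexCoeff M k m • v m =
      if h : (k : ℕ) < M - 1 then (∑ m, v m) - (√M * (√M + 1)) • v ⟨k, h⟩
      else (√M + 1) • ∑ m, v m := by
  split_ifs with h
  · have hk : ∀ m : Fin (M - 1), (k : ℕ) = m ↔ ⟨k, h⟩ = m := fun m =>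
      Fin.ext_iff (a := ⟨k, h⟩).symm
    simp [simplexCoeff, h, sub_smul, sum_sub_distrib, hk]
  · simp [simplexCoeff, h, smul_sum]

theorem sum_sum_simplexCoeff_smul (v : Fin (M - 1) → V) :
    ∑ k : Fin M, ∑ m : Fin (M - 1), simplexCoeff M k m • v m = 0 := by
  rw [sum_comm]
  refine sum_eq_zero fun m _ => ?_
  rw [← sum_smul, Fin.sum_univ_eq_sum_range (fun k => simplexCoeff M k m), sum_simplexCoeff m.isLt,
    zero_smul]

end Module

theorem symmetric_measurement_construction_general
    (d N M : ℕ) (hM : 2 ≤ M) (t : ℝ)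
    (G : Fin N → Fin (M - 1) → Matrix (Fin d) (Fin d) ℂ)
    (hTraceless : ∀ α k, (G α k).trace = 0)
    (hOrtho : ∀ α k β l, (G α k * G β l).trace = if α = β ∧ k = l then 1 else 0)
    (H : Fin N → Fin M → Matrix (Fin d) (Fin d) ℂ)
    (hH : ∀ α (k : Fin M), H α k =
      if h : (k : ℕ) < M - 1 then
        (∑ l, G α l) - (Real.sqrt M * (Real.sqrt M + 1)) • G α ⟨(k : ℕ), h⟩
      else (Real.sqrt M + 1) • (∑ l, G α l))
    (E : Fin N → Fin M → Matrix (Fin d) (Fin d) ℂ)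
    (hE : ∀ α k, E α k = ((M : ℝ)⁻¹) • (1 : Matrix (Fin d) (Fin d) ℂ) + t • H α k) :
    (∀ α, ∑ k, E α k = 1) ∧
    (∀ α k, (E α k).trace = (((d : ℝ) / M : ℝ) : ℂ)) ∧
    (∀ α k, (E α k * E α k).trace =
      (((d : ℝ) / M ^ 2 + t ^ 2 * ((M : ℝ) - 1) * (Real.sqrt M + 1) ^ 2 : ℝ) : ℂ)) ∧
    (∀ α k l, k ≠ l → (E α k * E α l).trace =
      (((d : ℝ) / M ^ 2 - t ^ 2 * (Real.sqrt M + 1) ^ 2 : ℝ) : ℂ)) ∧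
    (∀ α β k l, α ≠ β → (E α k * E β l).trace = (((d : ℝ) / M ^ 2 : ℝ) : ℂ)) := by
  have hH' : ∀ α k, H α k = ∑ m : Fin (M - 1), simplexCoeff M k m • G α m := fun α k =>
    (hH α k).trans (sum_simplexCoeff_smul (G α) k).symm
  have htrH : ∀ α k, (H α k).trace = 0 := fun α k => by
    simp [hH', trace_sum, hTraceless]
  have htrEE : ∀ α β k l, (E α k * E β l).trace = (((d : ℝ) / M ^ 2 + t ^ 2 *
      (if α = β then ∑ m ∈ range (M - 1), simplexCoeff M k m * simplexCoeff M l m else 0) : ℝ) :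
        ℂ) := by
    intro α β k l
    rw [hE, hE, trace_smul_one_add_smul_mul_smul_one_add_smul _ _ (htrH α k) (htrH β l), hH', hH',
      trace_sum_smul_mul_sum_smul G hOrtho,
      Fin.sum_univ_eq_sum_range (fun m => simplexCoeff M k m * simplexCoeff M l m)]
    split_ifs <;> simp [div_eq_inv_mul]
  refine ⟨fun α => ?_, fun α k => ?_, fun α k => ?_, fun α k l hkl => ?_, fun α β k l hαβ => ?_⟩
  · have hM0 : (M : ℝ) ≠ 0 := Nat.cast_ne_zero.2 (by omega)
    simp only [hE, sum_add_distrib, ← smul_sum, hH', sum_sum_simplexCoeff_smul, smul_zero, add_zero,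
      sum_const, card_univ, Fintype.card_fin, ← Nat.cast_smul_eq_nsmul ℝ, smul_smul,
      inv_mul_cancel₀ hM0, one_smul]
  · simp [hE, htrH, div_eq_inv_mul]
  · rw [htrEE, if_pos rfl, sum_simplexCoeff_mul_simplexCoeff k.isLt k.isLt, if_pos rfl]
    push_cast; ring
  · rw [htrEE, if_pos rfl, sum_simplexCoeff_mul_simplexCoeff k.isLt l.isLt,
      if_neg (Fin.val_injective.ne hkl)]
    push_cast; ring
  · rw [htrEE, if_neg hαβ]
    push_cast; ring

/-- given traceless Hermitian orthonormal matrices G_{α,k}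
(α = 1,…,N, k = 1,…,M−1), with G_α = Σ_k G_{α,k},
H_{α,k} = G_α − √M(√M+1)G_{α,k} (k < M), H_{α,M} = (√M+1)G_α, and
E_{α,k} = (1/M)I_d + t H_{α,k}, the operators E_{α,k} satisfy
Σ_k E_{α,k} = I_d, tr(E_{α,k}) = d/M, tr(E_{α,k}²) = d/M² + t²(M−1)(√M+1)²,
tr(E_{α,k}E_{α,l}) = d/M² − t²(√M+1)² for k ≠ l, and
tr(E_{α,k}E_{β,l}) = d/M² for α ≠ β. -/
theorem symmetric_measurement_construction
    (d N M : ℕ) (hM : 2 ≤ M) (t : ℝ)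
    (G : Fin N → Fin (M - 1) → Matrix (Fin d) (Fin d) ℂ)
    (hHerm : ∀ α k, (G α k).IsHermitian)
    (hTraceless : ∀ α k, (G α k).trace = 0)
    (hOrtho : ∀ α k β l, (G α k * G β l).trace = if α = β ∧ k = l then 1 else 0)
    (H : Fin N → Fin M → Matrix (Fin d) (Fin d) ℂ)
    (hH : ∀ α (k : Fin M), H α k =
      if h : (k : ℕ) < M - 1 then
        (∑ l, G α l) - (Real.sqrt M * (Real.sqrt M + 1)) • G α ⟨(k : ℕ), h⟩
      else (Real.sqrt M + 1) • (∑ l, G α l))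
    (E : Fin N → Fin M → Matrix (Fin d) (Fin d) ℂ)
    (hE : ∀ α k, E α k = ((M : ℝ)⁻¹) • (1 : Matrix (Fin d) (Fin d) ℂ) + t • H α k) :
    (∀ α, ∑ k, E α k = 1) ∧
    (∀ α k, (E α k).trace = (((d : ℝ) / M : ℝ) : ℂ)) ∧
    (∀ α k, (E α k * E α k).trace =
      (((d : ℝ) / M ^ 2 + t ^ 2 * ((M : ℝ) - 1) * (Real.sqrt M + 1) ^ 2 : ℝ) : ℂ)) ∧
    (∀ α k l, k ≠ l → (E α k * E α l).trace =
      (((d : ℝ) / M ^ 2 - t ^ 2 * (Real.sqrt M + 1) ^ 2 : ℝ) : ℂ)) ∧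
    (∀ α β k l, α ≠ β → (E α k * E β l).trace = (((d : ℝ) / M ^ 2 : ℝ) : ℂ)) :=
  symmetric_measurement_construction_general d N M hM t G hTraceless hOrtho H hH E hE
end
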